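/- arXiv:1310.7628 — 8 statements merged into one kernel-verified Lean document; each statement's English description precedes it below -/
import Mathlib

section
/- Let α > 0, λ > 0 and ω > α²/4. Set x̄ := (1/(2√ω))·log((2√ω − α)/(2√ω + α)) and ψ(x) := √(2ω/λ)·sech(√ω(|x| − x̄)). Then: (i) ∫_ℝ ψ(x)² dx = 4√ω/λ − 2α/λ; (ii) (1/2)∫_{ℝ∖{0}} ψ'(x)² dx − (α/2)ψ(0)² − (λ/4)∫_ℝ ψ(x)⁴ dx = −(2/(3λ))ω^{3/2} + α³/(12λ); (iii) the quantity in (ii) plus (ω/2) times the quantity in (i) equals (4/(3λ))ω^{3/2} − αω/λ + α³/(12λ). -/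
/-!
On each half-line ψ is a translate of the sech soliton, so with t = √ω (|x| - x̄) every
integral becomes an integral over t > -√ω x̄ of sech², sech⁴ = (tanh - tanh³/3)' or
(sech · tanh)² = (tanh³/3)' (the last one is ψ'², up to constants). All quantities are thus
polynomials in T = tanh(√ω x̄), and x̄ is exactly the shift for which T = -α / (2√ω).
-/

open MeasureTheory Real Filter Set Topology

noncomputable section

/-- sech x = 1 / cosh x -/
def sech (x : ℝ) : ℝ := 1 / Real.cosh x

lemma tanh_sq_add_sech_sq (x : ℝ) : tanh x ^ 2 + sech x ^ 2 = 1 := by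
  have hc := (cosh_pos x).ne'
  rw [sech, tanh_eq_sinh_div_cosh, div_pow, div_pow, one_pow, sinh_sq]
  field_simp
  ring

lemma tanh_eq_one_sub_two_div (x : ℝ) : tanh x = 1 - 2 / (exp (2 * x) + 1) := by
  have h : exp (2 * x) = exp x ^ 2 := by rw [← exp_nat_mul]; norm_num
  rw [tanh_eq_sinh_div_cosh, sinh_eq, cosh_eq, exp_neg, h]
  field_simp
  ring

lemma tendsto_tanh_atTop : Tendsto tanh atTop (𝓝 1) := by
  have hexp : Tendsto (fun x : ℝ => exp (2 * x) + 1) atTop atTop :=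
    tendsto_atTop_add_const_right _ 1
      (tendsto_exp_atTop.comp (tendsto_id.const_mul_atTop two_pos))
  simpa [funext tanh_eq_one_sub_two_div] using (hexp.const_div_atTop 2).const_sub 1

lemma tanh_half_mul_log {r : ℝ} (hr : 0 < r) : tanh (1 / 2 * log r) = (r - 1) / (r + 1) := by
  rw [tanh_eq_one_sub_two_div, ← mul_assoc, show (2 : ℝ) * (1 / 2) = 1 by norm_num, one_mul,
    exp_log hr]
  field_simp
  ring

lemma hasDerivAt_tanh (x : ℝ) : HasDerivAt tanh (sech x ^ 2) x := by
  have h := (hasDerivAt_sinh x).div (hasDerivAt_cosh x) (cosh_pos x).ne'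
  rw [show tanh = sinh / cosh from funext tanh_eq_sinh_div_cosh]
  refine h.congr_deriv ?_
  rw [sech, div_pow, one_pow, ← cosh_sq_sub_sinh_sq x]
  ring

lemma hasDerivAt_sech (x : ℝ) : HasDerivAt sech (-(sech x * tanh x)) x := by
  have h := ((hasDerivAt_cosh x).inv (cosh_pos x).ne')
  rw [show cosh⁻¹ = sech from funext fun y => (one_div _).symm] at h
  refine h.congr_deriv ?_
  rw [sech, tanh_eq_sinh_div_cosh]
  ring

lemma integral_comp_mul_abs_sub_of_hasDerivAt {f F : ℝ → ℝ} {l s : ℝ} (a : ℝ) (hs : 0 < s)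
    (hF : ∀ u, HasDerivAt F (f u) u) (hf : ∀ u, 0 ≤ f u) (hl : Tendsto F atTop (𝓝 l)) :
    ∫ x, f (s * (|x| - a)) = 2 * (l - F (-(s * a))) / s := by
  have hG : ∀ x, HasDerivAt (fun y => F (s * (y - a)) / s) (f (s * (x - a))) x := fun x => by
    have hlin : HasDerivAt (fun y => s * (y - a)) s x := by
      simpa using ((hasDerivAt_id x).sub_const a).const_mul s
    simpa [hs.ne'] using ((hF _).comp x hlin).div_const s
  have hGl : Tendsto (fun y => F (s * (y - a)) / s) atTop (𝓝 (l / s)) :=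
    (hl.comp ((tendsto_atTop_add_const_right _ (-a) tendsto_id).const_mul_atTop hs)).div_const s
  rw [integral_comp_abs (f := fun t => f (s * (t - a))),
    integral_Ioi_of_hasDerivAt_of_nonneg' (fun x _ => hG x) (fun x _ => hf _) hGl]
  ring_nf

def sechProfile (A s a x : ℝ) : ℝ := A * sech (s * (|x| - a))

lemma sechProfile_zero_sq (A s a : ℝ) :
    sechProfile A s a 0 ^ 2 = A ^ 2 * (1 - tanh (s * a) ^ 2) := by
  have h := tanh_sq_add_sech_sq (s * a)
  rw [sechProfile, abs_zero, zero_sub, mul_neg, sech, cosh_neg, ← sech]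
  linear_combination A ^ 2 * h

lemma integral_sechProfile_sq (A a : ℝ) {s : ℝ} (hs : 0 < s) :
    ∫ x, sechProfile A s a x ^ 2 = 2 * A ^ 2 * (1 + tanh (s * a)) / s := by
  simp only [sechProfile, mul_pow]
  rw [integral_const_mul, integral_comp_mul_abs_sub_of_hasDerivAt a hs hasDerivAt_tanh
    (fun u => sq_nonneg _) tendsto_tanh_atTop, tanh_neg]
  ring

lemma integral_sechProfile_pow_four (A a : ℝ) {s : ℝ} (hs : 0 < s) :
    ∫ x, sechProfile A s a x ^ 4
      = 2 * A ^ 4 * (2 / 3 + tanh (s * a) - tanh (s * a) ^ 3 / 3) / s := by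
  have hF (u : ℝ) : HasDerivAt (fun v => tanh v - tanh v ^ 3 / 3) (sech u ^ 4) u := by
    refine ((hasDerivAt_tanh u).sub (((hasDerivAt_tanh u).pow 3).div_const 3)).congr_deriv ?_
    linear_combination (-(sech u ^ 2)) * tanh_sq_add_sech_sq u
  have hl : Tendsto (fun v => tanh v - tanh v ^ 3 / 3) atTop (𝓝 (2 / 3)) := by
    convert tendsto_tanh_atTop.sub ((tendsto_tanh_atTop.pow 3).div_const 3) using 2
    norm_num
  simp only [sechProfile, mul_pow]
  rw [integral_const_mul, integral_comp_mul_abs_sub_of_hasDerivAt a hs hF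
    (fun u => by positivity) hl, tanh_neg]
  ring

lemma hasDerivAt_sechProfile (A s a : ℝ) {x : ℝ} (hx : x ≠ 0) :
    HasDerivAt (sechProfile A s a)
      (A * (-(sech (s * (|x| - a)) * tanh (s * (|x| - a))) * (s * SignType.sign x))) x := by
  have hlin : HasDerivAt (fun y => s * (|y| - a)) (s * SignType.sign x) x :=
    ((hasDerivAt_abs hx).sub_const a).const_mul s
  exact ((hasDerivAt_sech _).comp x hlin).const_mul A

lemma deriv_sechProfile_sq (A s a : ℝ) {x : ℝ} (hx : x ≠ 0) :
    deriv (sechProfile A s a) x ^ 2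
      = A ^ 2 * s ^ 2 * (sech (s * (|x| - a)) * tanh (s * (|x| - a))) ^ 2 := by
  have hsign : (SignType.sign x : ℝ) ^ 2 = 1 := by
    rcases hx.lt_or_gt with h | h <;> simp [h]
  rw [(hasDerivAt_sechProfile A s a hx).deriv]
  linear_combination (A * s * sech (s * (|x| - a)) * tanh (s * (|x| - a))) ^ 2 * hsign

lemma setIntegral_compl_zero_deriv_sechProfile_sq (A a : ℝ) {s : ℝ} (hs : 0 < s) :
    ∫ x in ({0}ᶜ : Set ℝ), deriv (sechProfile A s a) x ^ 2
      = 2 * A ^ 2 * s * (1 + tanh (s * a) ^ 3) / 3 := by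
  have hF (u : ℝ) : HasDerivAt (fun v => tanh v ^ 3 / 3) ((sech u * tanh u) ^ 2) u := by
    refine (((hasDerivAt_tanh u).pow 3).div_const 3).congr_deriv ?_
    ring
  have hl : Tendsto (fun v => tanh v ^ 3 / 3) atTop (𝓝 (1 / 3)) := by
    convert (tendsto_tanh_atTop.pow 3).div_const 3 using 2
    norm_num
  rw [setIntegral_congr_fun (measurableSet_singleton 0).compl
      (fun x hx => deriv_sechProfile_sq A s a hx), restrict_compl_singleton,
    integral_const_mul, integral_comp_mul_abs_sub_of_hasDerivAt a hs hF
      (fun u => sq_nonneg _) hl, tanh_neg]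
  field_simp
  ring

theorem statement1_general (α lam ω : ℝ) (hlam : 0 < lam) (hω : α ^ 2 / 4 < ω)
    (xbar : ℝ)
    (hxbar : xbar = (1 / (2 * Real.sqrt ω)) *
      Real.log ((2 * Real.sqrt ω - α) / (2 * Real.sqrt ω + α)))
    (ψ : ℝ → ℝ)
    (hψ : ∀ x, ψ x = Real.sqrt (2 * ω / lam) * sech (Real.sqrt ω * (|x| - xbar))) :
    (∫ x : ℝ, (ψ x) ^ 2) = 4 * Real.sqrt ω / lam - 2 * α / lam ∧
    (1 / 2) * (∫ x in ({(0:ℝ)}ᶜ : Set ℝ), (deriv ψ x) ^ 2)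
        - (α / 2) * (ψ 0) ^ 2 - (lam / 4) * (∫ x : ℝ, (ψ x) ^ 4)
      = -(2 / (3 * lam)) * ω ^ ((3:ℝ)/2) + α ^ 3 / (12 * lam) ∧
    ((1 / 2) * (∫ x in ({(0:ℝ)}ᶜ : Set ℝ), (deriv ψ x) ^ 2)
        - (α / 2) * (ψ 0) ^ 2 - (lam / 4) * (∫ x : ℝ, (ψ x) ^ 4))
        + (ω / 2) * (∫ x : ℝ, (ψ x) ^ 2)
      = (4 / (3 * lam)) * ω ^ ((3:ℝ)/2) - α * ω / lam + α ^ 3 / (12 * lam) := by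
  have hω0 : 0 < ω := lt_of_le_of_lt (by positivity) hω
  have hpow : ω ^ ((3:ℝ) / 2) = √ω ^ 3 := by
    rw [rpow_div_two_eq_sqrt 3 hω0.le]
    norm_cast
  have hA : √(2 * ω / lam) ^ 2 = 2 * ω / lam := sq_sqrt (by positivity)
  obtain ⟨s, hs, rfl⟩ : ∃ s, 0 < s ∧ ω = s ^ 2 := ⟨√ω, sqrt_pos.2 hω0, (sq_sqrt hω0.le).symm⟩
  rw [sqrt_sq hs.le] at hxbar hψ hpow ⊢
  obtain ⟨hα_gt, hα_lt⟩ : -(2 * s) < α ∧ α < 2 * s :=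
    abs_lt_of_sq_lt_sq' (by linarith) (by positivity)
  have h2sα : 2 * s + α ≠ 0 := by linarith
  have hT : tanh (s * xbar) = -α / (2 * s) := by
    rw [hxbar, show s * (1 / (2 * s) * log ((2 * s - α) / (2 * s + α)))
        = 1 / 2 * log ((2 * s - α) / (2 * s + α)) by field_simp,
      tanh_half_mul_log (div_pos (by linarith) (by linarith))]
    field_simp
    ring
  obtain rfl : ψ = sechProfile √(2 * s ^ 2 / lam) s xbar := funext hψ
  rw [integral_sechProfile_sq _ _ hs, integral_sechProfile_pow_four _ _ hs,
    setIntegral_compl_zero_deriv_sechProfile_sq _ _ hs, sechProfile_zero_sq,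
    show √(2 * s ^ 2 / lam) ^ 4 = (√(2 * s ^ 2 / lam) ^ 2) ^ 2 by ring, hA, hT, hpow]
  refine ⟨?_, ?_, ?_⟩ <;> field_simp <;> ring

/-- L²-norm, energy and action of the ground state of the cubic NLS
with an attractive Dirac delta potential of strength α. -/
theorem statement1 (α lam ω : ℝ) (hα : 0 < α) (hlam : 0 < lam) (hω : α ^ 2 / 4 < ω)
    (xbar : ℝ)
    (hxbar : xbar = (1 / (2 * Real.sqrt ω)) *
      Real.log ((2 * Real.sqrt ω - α) / (2 * Real.sqrt ω + α)))
    (ψ : ℝ → ℝ)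
    (hψ : ∀ x, ψ x = Real.sqrt (2 * ω / lam) * sech (Real.sqrt ω * (|x| - xbar))) :
    (∫ x : ℝ, (ψ x) ^ 2) = 4 * Real.sqrt ω / lam - 2 * α / lam ∧
    (1 / 2) * (∫ x in ({(0:ℝ)}ᶜ : Set ℝ), (deriv ψ x) ^ 2)
        - (α / 2) * (ψ 0) ^ 2 - (lam / 4) * (∫ x : ℝ, (ψ x) ^ 4)
      = -(2 / (3 * lam)) * ω ^ ((3:ℝ)/2) + α ^ 3 / (12 * lam) ∧
    ((1 / 2) * (∫ x in ({(0:ℝ)}ᶜ : Set ℝ), (deriv ψ x) ^ 2)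
        - (α / 2) * (ψ 0) ^ 2 - (lam / 4) * (∫ x : ℝ, (ψ x) ^ 4))
        + (ω / 2) * (∫ x : ℝ, (ψ x) ^ 2)
      = (4 / (3 * lam)) * ω ^ ((3:ℝ)/2) - α * ω / lam + α ^ 3 / (12 * lam) :=
  statement1_general α lam ω hlam hω xbar hxbar ψ hψ

end
end

section
/- Fix α > 0 and ρ > 0. For λ > 0, set √ω_λ := λρ/4 + α/2, x̄_λ := (2/(λρ + 2α))·log(λρ/(λρ + 4α)), and φ_λ(x) := √(2ω_λ/λ)·sech(√ω_λ(|x| − x̄_λ)). Let g(x) := √(ρα/2)·e^{−(α/2)|x|}. Then, as λ → 0+, ∫_ℝ |φ_λ(x) − g(x)|² dx + ∫_{ℝ∖{0}} |φ_λ'(x) − g'(x)|² dx → 0; that is, φ_λ converges to g in H¹(ℝ). -/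
open MeasureTheory Real Filter Set Topology

noncomputable section

/-!
For `t > 0`, `sech (y - log t / 2) = 2 √t e^{-y} / (1 + t e^{-2y})`, so the ground state is the
profile `A e^{-b|x|} / (1 + t e^{-2b|x|})` with `b = λρ/4 + α/2`, `t = λρ/(λρ + 4α)` and
`A = 2b √(2ρ/(λρ + 4α))`, while `g` is the same profile with `(A, b, t) = (√(ρα/2), α/2, 0)`.
These parameters are continuous in `λ` up to `λ = 0`, where they take exactly the values of `g`.
For `t ≥ 0` the profile is bounded by `|A| e^{-b|x|}` and its derivative by `|A b| e^{-b|x|}`,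
so dominated convergence gives the convergence of both in `L²`.
-/
lemma sech_sub_log_div_two {t : ℝ} (ht : 0 < t) (y : ℝ) :
    sech (y - log t / 2) = 2 * √t * exp (-y) / (1 + t * exp (-y) ^ 2) := by
  obtain ⟨s, hs, rfl⟩ : ∃ s, 0 < s ∧ t = s ^ 2 := ⟨√t, sqrt_pos.2 ht, (sq_sqrt ht.le).symm⟩
  have hexp : exp (log (s ^ 2) / 2) = s := by
    rw [log_pow, Nat.cast_ofNat, mul_div_cancel_left₀ _ two_ne_zero, exp_log hs]
  rw [sech, cosh_eq, neg_sub, exp_sub, exp_sub, hexp, sqrt_sq hs.le, exp_neg]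
  have := exp_pos y
  field_simp

lemma integrable_exp_neg_mul_abs {c : ℝ} (hc : 0 < c) :
    Integrable (fun x : ℝ => exp (-c * |x|)) := by
  rw [← integrableOn_univ, ← Iic_union_Ioi (a := 0)]
  refine IntegrableOn.union ?_ ?_
  · refine (integrableOn_exp_mul_Iic hc 0).congr_fun (fun x hx => ?_) measurableSet_Iic
    rw [abs_of_nonpos hx, neg_mul_neg]
  · refine (integrableOn_exp_mul_Ioi (neg_neg_of_pos hc) 0).congr_fun (fun x hx => ?_)
      measurableSet_Ioi
    rw [abs_of_pos hx]

lemma measurable_sign_cast : Measurable (fun x : ℝ => (SignType.sign x : ℝ)) := by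
  refine Monotone.measurable fun a b hab => ?_
  rcases lt_trichotomy a 0 with ha | ha | ha <;> rcases lt_trichotomy b 0 with hb | hb | hb <;>
    simp [ha, hb] <;> linarith

theorem tendsto_integral_sq_sub_of_dominated {ι X : Type*} [MeasurableSpace X] {μ : Measure X}
    {l : Filter ι} [l.IsCountablyGenerated] {F : ι → X → ℝ} {f h : X → ℝ}
    (hF_meas : ∀ᶠ i in l, AEStronglyMeasurable (F i) μ) (hf_meas : AEStronglyMeasurable f μ)
    (hF_le : ∀ᶠ i in l, ∀ᵐ x ∂μ, |F i x| ≤ h x) (hf_le : ∀ᵐ x ∂μ, |f x| ≤ h x)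
    (h_int : Integrable (fun x => h x ^ 2) μ)
    (h_lim : ∀ᵐ x ∂μ, Tendsto (fun i => F i x) l (𝓝 (f x))) :
    Tendsto (fun i => ∫ x, (F i x - f x) ^ 2 ∂μ) l (𝓝 0) := by
  have h_sq_le : ∀ᶠ i in l, ∀ᵐ x ∂μ, ‖(F i x - f x) ^ 2‖ ≤ 4 * h x ^ 2 := by
    filter_upwards [hF_le] with i hi
    filter_upwards [hi, hf_le] with x hFx hfx
    calc ‖(F i x - f x) ^ 2‖ = |F i x - f x| ^ 2 := by rw [norm_pow, norm_eq_abs]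
      _ ≤ (2 * h x) ^ 2 := pow_le_pow_left₀ (abs_nonneg _) ((abs_sub _ _).trans (by linarith)) 2
      _ = 4 * h x ^ 2 := by ring
  have h_lim_sq : ∀ᵐ x ∂μ, Tendsto (fun i => (F i x - f x) ^ 2) l (𝓝 0) := by
    filter_upwards [h_lim] with x hx
    simpa using ((hx.sub_const (f x)).pow 2)
  simpa using tendsto_integral_filter_of_dominated_convergence _
    (hF_meas.mono fun i hi => (hi.sub hf_meas).pow 2) h_sq_le (h_int.const_mul 4) h_lim_sq

theorem tendsto_integral_sq_sub_of_abs_le_mul_exp {ι : Type*} {l : Filter ι}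
    [l.IsCountablyGenerated] {F : ι → ℝ → ℝ} {f : ℝ → ℝ} {C b : ι → ℝ} {C₀ b₀ : ℝ}
    (hF_meas : ∀ i, Measurable (F i)) (hf_meas : Measurable f)
    (hF_le : ∀ᶠ i in l, ∀ x, |F i x| ≤ |C i| * exp (-b i * |x|))
    (hf_le : ∀ x, |f x| ≤ |C₀| * exp (-b₀ * |x|))
    (hC : Tendsto C l (𝓝 C₀)) (hb : Tendsto b l (𝓝 b₀)) (hb₀ : 0 < b₀)
    (h_lim : ∀ x, Tendsto (fun i => F i x) l (𝓝 (f x))) :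
    Tendsto (fun i => ∫ x, (F i x - f x) ^ 2) l (𝓝 0) := by
  set h : ℝ → ℝ := fun x => (|C₀| + 1) * exp (-(b₀ / 2) * |x|)
  have h_le {c β : ℝ} (hc : |c| ≤ |C₀| + 1) (hβ : b₀ / 2 ≤ β) (x : ℝ) :
      |c| * exp (-β * |x|) ≤ h x :=
    mul_le_mul hc (exp_le_exp.2 (by nlinarith [abs_nonneg x])) (exp_pos _).le (by positivity)
  have h_sq : (fun x => h x ^ 2) = fun x => (|C₀| + 1) ^ 2 * exp (-b₀ * |x|) := by
    ext x
    rw [mul_pow, ← exp_nat_mul]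
    ring_nf
  refine tendsto_integral_sq_sub_of_dominated (.of_forall fun i => (hF_meas i).aestronglyMeasurable)
    hf_meas.aestronglyMeasurable ?_ (.of_forall fun x => (hf_le x).trans (h_le (by linarith)
      (by linarith) x)) (h_sq ▸ (integrable_exp_neg_mul_abs hb₀).const_mul _) (.of_forall h_lim)
  filter_upwards [hF_le, hC.abs.eventually_le_const (lt_add_one _),
    hb.eventually_const_le (half_lt_self hb₀)] with i hi hCi hbi
  exact .of_forall fun x => (hi x).trans (h_le hCi hbi x)

def expProfile (A b t x : ℝ) : ℝ :=
  A * exp (-b * |x|) / (1 + t * exp (-b * |x|) ^ 2)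

def expProfileDeriv (A b t x : ℝ) : ℝ :=
  -(A * b) * exp (-b * |x|) * (1 - t * exp (-b * |x|) ^ 2) / (1 + t * exp (-b * |x|) ^ 2) ^ 2 *
    SignType.sign x

section expProfile

variable {A b t : ℝ}

lemma hasDerivAt_expProfile (ht : 0 ≤ t) {x : ℝ} (hx : x ≠ 0) :
    HasDerivAt (expProfile A b t) (expProfileDeriv A b t x) x := by
  have hE (s : ℝ) : HasDerivAt (fun s => exp (-b * s)) (exp (-b * s) * -b) s := by
    simpa using ((hasDerivAt_id s).const_mul (-b)).exp
  have hden (s : ℝ) : 1 + t * exp (-b * s) ^ 2 ≠ 0 := by positivity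
  have hradial :=
    ((hE |x|).const_mul A).div (((hE |x|).pow 2).const_mul t |>.const_add 1) (hden |x|)
  refine (hradial.comp x (hasDerivAt_abs hx)).congr_deriv ?_
  simp only [expProfileDeriv, Pi.pow_apply]
  field_simp
  ring

lemma abs_expProfile_le (ht : 0 ≤ t) (x : ℝ) : |expProfile A b t x| ≤ |A| * exp (-b * |x|) := by
  have hden : 0 < 1 + t * exp (-b * |x|) ^ 2 := by positivity
  rw [expProfile, abs_div, abs_mul, abs_of_pos (exp_pos _), abs_of_pos hden]
  exact div_le_self (by positivity) (le_add_of_nonneg_right (by positivity))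

lemma abs_expProfileDeriv_le (ht : 0 ≤ t) (x : ℝ) :
    |expProfileDeriv A b t x| ≤ |A * b| * exp (-b * |x|) := by
  unfold expProfileDeriv
  set u := t * exp (-b * |x|) ^ 2
  have hu : 0 ≤ u := by positivity
  have hfrac : |1 - u| / (1 + u) ^ 2 ≤ 1 := by
    rw [div_le_one (by positivity), abs_le]
    constructor <;> nlinarith
  have hsign : |(SignType.sign x : ℝ)| ≤ 1 := by
    rcases lt_trichotomy x 0 with h | h | h <;> simp [h]
  rw [abs_mul, abs_div, abs_mul, abs_mul, abs_neg, abs_of_pos (exp_pos _),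
    abs_of_pos (by positivity : 0 < (1 + u) ^ 2)]
  calc |A * b| * exp (-b * |x|) * |1 - u| / (1 + u) ^ 2 * |(SignType.sign x : ℝ)|
      = |A * b| * exp (-b * |x|) * (|1 - u| / (1 + u) ^ 2) * |(SignType.sign x : ℝ)| := by ring
    _ ≤ |A * b| * exp (-b * |x|) * 1 * 1 := by gcongr
    _ = |A * b| * exp (-b * |x|) := by ring

lemma measurable_expProfile : Measurable (expProfile A b t) := by
  unfold expProfile; fun_prop

lemma measurable_expProfileDeriv : Measurable (expProfileDeriv A b t) := by
  unfold expProfileDeriv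
  exact (by fun_prop : Measurable fun x : ℝ => -(A * b) * exp (-b * |x|) *
    (1 - t * exp (-b * |x|) ^ 2) / (1 + t * exp (-b * |x|) ^ 2) ^ 2).mul measurable_sign_cast

end expProfile

section limits

variable {ι : Type*} {l : Filter ι} {A b t : ι → ℝ} {A₀ b₀ t₀ : ℝ}

lemma Filter.Tendsto.expProfile (hA : Tendsto A l (𝓝 A₀)) (hb : Tendsto b l (𝓝 b₀))
    (ht : Tendsto t l (𝓝 t₀)) (ht₀ : 0 ≤ t₀) (x : ℝ) :
    Tendsto (fun i => expProfile (A i) (b i) (t i) x) l (𝓝 (expProfile A₀ b₀ t₀ x)) := by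
  have hE := (hb.neg.mul_const |x|).rexp
  have hden : 0 < 1 + t₀ * Real.exp (-b₀ * |x|) ^ 2 := by positivity
  exact (hA.mul hE).div ((ht.mul (hE.pow 2)).const_add 1) hden.ne'

lemma Filter.Tendsto.expProfileDeriv (hA : Tendsto A l (𝓝 A₀)) (hb : Tendsto b l (𝓝 b₀))
    (ht : Tendsto t l (𝓝 t₀)) (ht₀ : 0 ≤ t₀) (x : ℝ) :
    Tendsto (fun i => expProfileDeriv (A i) (b i) (t i) x) l
      (𝓝 (expProfileDeriv A₀ b₀ t₀ x)) := by
  have hE := (hb.neg.mul_const |x|).rexp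
  have hu := ht.mul (hE.pow 2)
  have hden : 0 < (1 + t₀ * Real.exp (-b₀ * |x|) ^ 2) ^ 2 := by positivity
  exact (((hA.mul hb).neg.mul hE).mul (hu.const_sub 1) |>.div ((hu.const_add 1).pow 2)
    hden.ne').mul_const _

variable [l.IsCountablyGenerated]

theorem tendsto_integral_sq_sub_expProfile (hA : Tendsto A l (𝓝 A₀)) (hb : Tendsto b l (𝓝 b₀))
    (ht : Tendsto t l (𝓝 t₀)) (hb₀ : 0 < b₀) (ht_nonneg : ∀ᶠ i in l, 0 ≤ t i) (ht₀ : 0 ≤ t₀) :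
    Tendsto (fun i => ∫ x, (expProfile (A i) (b i) (t i) x - expProfile A₀ b₀ t₀ x) ^ 2) l
      (𝓝 0) :=
  tendsto_integral_sq_sub_of_abs_le_mul_exp (fun _ => measurable_expProfile)
    measurable_expProfile (ht_nonneg.mono fun _ hi => abs_expProfile_le hi)
    (abs_expProfile_le ht₀) hA hb hb₀ (hA.expProfile hb ht ht₀)

theorem tendsto_integral_sq_sub_expProfileDeriv (hA : Tendsto A l (𝓝 A₀))
    (hb : Tendsto b l (𝓝 b₀)) (ht : Tendsto t l (𝓝 t₀)) (hb₀ : 0 < b₀)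
    (ht_nonneg : ∀ᶠ i in l, 0 ≤ t i) (ht₀ : 0 ≤ t₀) :
    Tendsto (fun i => ∫ x, (expProfileDeriv (A i) (b i) (t i) x -
      expProfileDeriv A₀ b₀ t₀ x) ^ 2) l (𝓝 0) :=
  tendsto_integral_sq_sub_of_abs_le_mul_exp (fun _ => measurable_expProfileDeriv)
    measurable_expProfileDeriv (ht_nonneg.mono fun _ hi => abs_expProfileDeriv_le hi)
    (abs_expProfileDeriv_le ht₀) (hA.mul hb) hb hb₀ (hA.expProfileDeriv hb ht ht₀)

end limits

section groundState

variable {α ρ : ℝ}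

lemma groundState_eq_expProfile (hα : 0 < α) (hρ : 0 < ρ) {lam : ℝ} (hlam : 0 < lam) (x : ℝ) :
    √(2 * (lam * ρ / 4 + α / 2) ^ 2 / lam) *
        sech ((lam * ρ / 4 + α / 2) *
          (|x| - (2 / (lam * ρ + 2 * α)) * log (lam * ρ / (lam * ρ + 4 * α)))) =
      expProfile (2 * (lam * ρ / 4 + α / 2) * √(2 * ρ / (lam * ρ + 4 * α)))
        (lam * ρ / 4 + α / 2) (lam * ρ / (lam * ρ + 4 * α)) x := by
  have ht : 0 < lam * ρ / (lam * ρ + 4 * α) := by positivity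
  have harg : (lam * ρ / 4 + α / 2) *
      (|x| - (2 / (lam * ρ + 2 * α)) * log (lam * ρ / (lam * ρ + 4 * α))) =
      (lam * ρ / 4 + α / 2) * |x| - log (lam * ρ / (lam * ρ + 4 * α)) / 2 := by
    field_simp
    ring
  have hamp : √(2 * (lam * ρ / 4 + α / 2) ^ 2 / lam) * √(lam * ρ / (lam * ρ + 4 * α)) =
      (lam * ρ / 4 + α / 2) * √(2 * ρ / (lam * ρ + 4 * α)) := by
    rw [← sqrt_mul (by positivity), ← sqrt_sq (by positivity : 0 ≤ lam * ρ / 4 + α / 2),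
      ← sqrt_mul (sq_nonneg _), sqrt_sq (by positivity : 0 ≤ lam * ρ / 4 + α / 2)]
    congr 1
    field_simp
  rw [harg, sech_sub_log_div_two ht, expProfile, neg_mul]
  linear_combination (2 * exp (-((lam * ρ / 4 + α / 2) * |x|)) /
    (1 + lam * ρ / (lam * ρ + 4 * α) * exp (-((lam * ρ / 4 + α / 2) * |x|)) ^ 2)) * hamp

lemma tendsto_groundState_decayRate :
    Tendsto (fun lam => lam * ρ / 4 + α / 2) (𝓝[>] 0) (𝓝 (α / 2)) := by
  have hcont : ContinuousAt (fun lam => lam * ρ / 4 + α / 2) 0 := by fun_prop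
  simpa using hcont.continuousWithinAt.tendsto

lemma tendsto_groundState_weight (hα : 0 < α) :
    Tendsto (fun lam => lam * ρ / (lam * ρ + 4 * α)) (𝓝[>] 0) (𝓝 0) := by
  have hcont : ContinuousAt (fun lam => lam * ρ / (lam * ρ + 4 * α)) 0 := by
    fun_prop (disch := simp only [zero_mul, zero_add]; positivity)
  simpa using hcont.continuousWithinAt.tendsto

lemma tendsto_groundState_amplitude (hα : 0 < α) :
    Tendsto (fun lam => 2 * (lam * ρ / 4 + α / 2) * √(2 * ρ / (lam * ρ + 4 * α))) (𝓝[>] 0)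
      (𝓝 √(ρ * α / 2)) := by
  have hcont : ContinuousAt
      (fun lam => 2 * (lam * ρ / 4 + α / 2) * √(2 * ρ / (lam * ρ + 4 * α))) 0 := by
    fun_prop (disch := simp only [zero_mul, zero_add]; positivity)
  convert hcont.continuousWithinAt.tendsto using 2
  rw [show ρ * α / 2 = α ^ 2 * (2 * ρ / (0 * ρ + 4 * α)) by field_simp; ring,
    sqrt_mul (sq_nonneg _), sqrt_sq hα.le]
  ring

end groundState

/-- Linear limit λ → 0+ at fixed mass ρ of the ground state of the cubic NLS with an
attractive Dirac delta potential: φ_λ → √(ρα/2) e^{-(α/2)|x|} in H¹(ℝ). -/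
theorem statement2 (α ρ : ℝ) (hα : 0 < α) (hρ : 0 < ρ)
    (φ : ℝ → ℝ → ℝ)
    (hφ : ∀ lam x, φ lam x =
      Real.sqrt (2 * (lam * ρ / 4 + α / 2) ^ 2 / lam) *
        sech ((lam * ρ / 4 + α / 2) *
          (|x| - (2 / (lam * ρ + 2 * α)) * Real.log (lam * ρ / (lam * ρ + 4 * α)))))
    (g : ℝ → ℝ)
    (hg : ∀ x, g x = Real.sqrt (ρ * α / 2) * Real.exp (-(α / 2) * |x|)) :
    Tendsto (fun lam : ℝ =>
        (∫ x : ℝ, (φ lam x - g x) ^ 2)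
          + ∫ x in ({(0:ℝ)}ᶜ : Set ℝ), (deriv (φ lam) x - deriv g x) ^ 2)
      (𝓝[>] 0) (𝓝 0) := by
  have hφ_eq (lam : ℝ) (hlam : 0 < lam) : φ lam = expProfile
      (2 * (lam * ρ / 4 + α / 2) * √(2 * ρ / (lam * ρ + 4 * α))) (lam * ρ / 4 + α / 2)
      (lam * ρ / (lam * ρ + 4 * α)) :=
    funext fun x => (hφ lam x).trans (groundState_eq_expProfile hα hρ hlam x)
  have hg_eq : g = expProfile √(ρ * α / 2) (α / 2) 0 := funext fun x => by simp [hg, expProfile]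
  have ht_nonneg : ∀ᶠ lam in 𝓝[>] (0 : ℝ), 0 ≤ lam * ρ / (lam * ρ + 4 * α) :=
    eventually_nhdsWithin_of_forall fun lam (hlam : 0 < lam) => by positivity
  have hA := tendsto_groundState_amplitude (ρ := ρ) hα
  have hb := tendsto_groundState_decayRate (ρ := ρ) (α := α)
  have ht := tendsto_groundState_weight (ρ := ρ) hα
  have h_sum := (tendsto_integral_sq_sub_expProfile hA hb ht (half_pos hα) ht_nonneg le_rfl).add
    (tendsto_integral_sq_sub_expProfileDeriv hA hb ht (half_pos hα) ht_nonneg le_rfl)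
  rw [add_zero] at h_sum
  refine h_sum.congr' ?_
  filter_upwards [self_mem_nhdsWithin] with lam (hlam : 0 < lam)
  rw [hφ_eq lam hlam, hg_eq, restrict_compl_singleton]
  congr 1
  refine integral_congr_ae ?_
  filter_upwards [Measure.ae_ne volume 0] with x hx
  rw [(hasDerivAt_expProfile (by positivity) hx).deriv, (hasDerivAt_expProfile le_rfl hx).deriv]

end
end

section
/- Let γ > 0 and ω > 0. The system t₁² − t₁⁴ = t₂² − t₂⁴, 1/t₁ − 1/t₂ = γ√ω has exactly one solution (t₁, t₂) with 0 < t₁ ≤ 1 and 0 < t₂ ≤ 1, namely t₁ = (1 − √(1 + γ²ω) + √(γ²ω − 2 + 2√(1 + γ²ω)))/(2γ√ω) and t₂ = (−1 + √(1 + γ²ω) + √(γ²ω − 2 + 2√(1 + γ²ω)))/(2γ√ω); moreover this solution satisfies 0 < t₁ < t₂ < 1 and t₁² + t₂² = 1. -/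
/-!
With `g = γ√ω` the second equation reads `t₂ - t₁ = g t₁ t₂`, which forces `t₁ < t₂`, so the first
one, `(t₁² - t₂²)(1 - t₁² - t₂²) = 0`, reduces to `t₁² + t₂² = 1`. Squaring `t₂ - t₁ = g t₁ t₂` shows
that `p = t₁ t₂` solves `g²p² + 2p = 1`, which has a single positive root `(√(1 + g²) - 1)/g²`;
this fixes `t₂ - t₁` and `t₁ + t₂`, and the explicit formulas are the resulting pair.
-/

open Real

noncomputable section

theorem one_div_sub_one_div_eq_iff {t₁ t₂ g : ℝ} (h₁ : t₁ ≠ 0) (h₂ : t₂ ≠ 0) :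
    1 / t₁ - 1 / t₂ = g ↔ t₂ - t₁ = g * (t₁ * t₂) := by
  rw [div_sub_div _ _ h₁ h₂, div_eq_iff (mul_ne_zero h₁ h₂)]
  constructor <;> intro h <;> linear_combination h

theorem sq_sub_pow_four_eq_iff {R : Type*} [CommRing R] [IsDomain R] {t₁ t₂ : R}
    (h : t₁ ^ 2 ≠ t₂ ^ 2) :
    t₁ ^ 2 - t₁ ^ 4 = t₂ ^ 2 - t₂ ^ 4 ↔ t₁ ^ 2 + t₂ ^ 2 = 1 := by
  have hfactor : t₁ ^ 2 - t₁ ^ 4 - (t₂ ^ 2 - t₂ ^ 4) = (t₁ ^ 2 - t₂ ^ 2) * (1 - (t₁ ^ 2 + t₂ ^ 2)) := by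
    ring
  rw [← sub_eq_zero, hfactor, mul_eq_zero, sub_eq_zero, sub_eq_zero, eq_comm (a := (1 : R))]
  simp only [h, false_or]

theorem eq_of_sq_add_sq_eq_one_of_sub_eq_mul {g t₁ t₂ u₁ u₂ : ℝ}
    (ht₁ : 0 < t₁) (ht₂ : 0 < t₂) (ht : t₁ ^ 2 + t₂ ^ 2 = 1) (htg : t₂ - t₁ = g * (t₁ * t₂))
    (hu₁ : 0 < u₁) (hu₂ : 0 < u₂) (hu : u₁ ^ 2 + u₂ ^ 2 = 1) (hug : u₂ - u₁ = g * (u₁ * u₂)) :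
    t₁ = u₁ ∧ t₂ = u₂ := by
  have hprod : t₁ * t₂ = u₁ * u₂ := by
    have hfactor : (t₁ * t₂ - u₁ * u₂) * (g ^ 2 * (t₁ * t₂ + u₁ * u₂) + 2) = 0 := by
      linear_combination (u₂ - u₁ + g * (u₁ * u₂)) * hug - (t₂ - t₁ + g * (t₁ * t₂)) * htg
        + ht - hu
    have hpos : 0 < g ^ 2 * (t₁ * t₂ + u₁ * u₂) + 2 := by positivity
    simpa [sub_eq_zero, hpos.ne'] using hfactor
  have hdiff : t₂ - t₁ = u₂ - u₁ := by rw [htg, hug, hprod]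
  have hsum : t₁ + t₂ = u₁ + u₂ := by
    refine (pow_left_inj₀ (by positivity) (by positivity) two_ne_zero).mp ?_
    linear_combination ht - hu + 2 * hprod
  constructor <;> linarith

section ExplicitSolution

variable {g : ℝ}

-- The solution of T₊ in terms of `g = γ√ω`.
def tPlusLeft (g : ℝ) : ℝ := (1 - √(1 + g ^ 2) + √(g ^ 2 - 2 + 2 * √(1 + g ^ 2))) / (2 * g)

def tPlusRight (g : ℝ) : ℝ := (-1 + √(1 + g ^ 2) + √(g ^ 2 - 2 + 2 * √(1 + g ^ 2))) / (2 * g)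

theorem one_lt_sqrt_one_add_sq (hg : 0 < g) : 1 < √(1 + g ^ 2) := by
  rw [Real.lt_sqrt zero_le_one]; nlinarith

theorem sq_sqrt_one_add_sq : √(1 + g ^ 2) ^ 2 = 1 + g ^ 2 := Real.sq_sqrt (by positivity)

theorem sq_sqrt_sq_sub_two_add_two_mul_sqrt (hg : 0 < g) :
    √(g ^ 2 - 2 + 2 * √(1 + g ^ 2)) ^ 2 = g ^ 2 - 2 + 2 * √(1 + g ^ 2) := by
  have := one_lt_sqrt_one_add_sq hg
  exact Real.sq_sqrt (by nlinarith)

theorem tPlusLeft_add_tPlusRight_mul (hg : 0 < g) :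
    (tPlusLeft g + tPlusRight g) * g = √(g ^ 2 - 2 + 2 * √(1 + g ^ 2)) := by
  unfold tPlusLeft tPlusRight; field_simp; ring

theorem tPlusRight_sub_tPlusLeft_mul (hg : 0 < g) :
    (tPlusRight g - tPlusLeft g) * g = √(1 + g ^ 2) - 1 := by
  unfold tPlusLeft tPlusRight; field_simp; ring

theorem tPlusLeft_mul_tPlusRight_mul (hg : 0 < g) :
    tPlusLeft g * tPlusRight g * g ^ 2 = √(1 + g ^ 2) - 1 := by
  have hb := sq_sqrt_sq_sub_two_add_two_mul_sqrt hg
  have ha := sq_sqrt_one_add_sq (g := g)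
  unfold tPlusLeft tPlusRight
  generalize √(g ^ 2 - 2 + 2 * √(1 + g ^ 2)) = b at hb ⊢
  generalize √(1 + g ^ 2) = a at ha hb ⊢
  field_simp
  linear_combination hb - ha

theorem tPlusLeft_pos (hg : 0 < g) : 0 < tPlusLeft g := by
  have ha := one_lt_sqrt_one_add_sq hg
  have hb : √(1 + g ^ 2) - 1 < √(g ^ 2 - 2 + 2 * √(1 + g ^ 2)) := by
    rw [Real.lt_sqrt (by linarith)]; nlinarith [sq_sqrt_one_add_sq (g := g)]
  unfold tPlusLeft; exact div_pos (by linarith) (by positivity)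

theorem tPlusLeft_lt_tPlusRight (hg : 0 < g) : tPlusLeft g < tPlusRight g := by
  have := tPlusRight_sub_tPlusLeft_mul hg
  have := one_lt_sqrt_one_add_sq hg
  nlinarith

theorem tPlusLeft_sq_add_tPlusRight_sq (hg : 0 < g) : tPlusLeft g ^ 2 + tPlusRight g ^ 2 = 1 := by
  refine mul_right_cancel₀ (pow_ne_zero 2 hg.ne') ?_
  linear_combination ((tPlusLeft g + tPlusRight g) * g + √(g ^ 2 - 2 + 2 * √(1 + g ^ 2)))
    * tPlusLeft_add_tPlusRight_mul hg - 2 * tPlusLeft_mul_tPlusRight_mul hg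
    + sq_sqrt_sq_sub_two_add_two_mul_sqrt hg

theorem tPlusRight_sub_tPlusLeft (hg : 0 < g) :
    tPlusRight g - tPlusLeft g = g * (tPlusLeft g * tPlusRight g) := by
  refine mul_right_cancel₀ hg.ne' ?_
  linear_combination tPlusRight_sub_tPlusLeft_mul hg - tPlusLeft_mul_tPlusRight_mul hg

theorem tPlusRight_lt_one (hg : 0 < g) : tPlusRight g < 1 := by
  have := tPlusLeft_pos hg
  have := tPlusLeft_lt_tPlusRight hg
  nlinarith [tPlusLeft_sq_add_tPlusRight_sq hg]

end ExplicitSolution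

/-- The system T₊ : t₁² − t₁⁴ = t₂² − t₂⁴, 1/t₁ − 1/t₂ = γ√ω has a unique solution with
0 < t₁ ≤ 1, 0 < t₂ ≤ 1, given explicitly, and it satisfies 0 < t₁ < t₂ < 1 and t₁² + t₂² = 1. -/
theorem statement4 (γ ω : ℝ) (hγ : 0 < γ) (hω : 0 < ω)
    (s₁ s₂ : ℝ)
    (hs₁ : s₁ = (1 - Real.sqrt (1 + γ ^ 2 * ω)
        + Real.sqrt (γ ^ 2 * ω - 2 + 2 * Real.sqrt (1 + γ ^ 2 * ω)))
      / (2 * γ * Real.sqrt ω))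
    (hs₂ : s₂ = (-1 + Real.sqrt (1 + γ ^ 2 * ω)
        + Real.sqrt (γ ^ 2 * ω - 2 + 2 * Real.sqrt (1 + γ ^ 2 * ω)))
      / (2 * γ * Real.sqrt ω)) :
    (∀ t₁ t₂ : ℝ,
      (0 < t₁ ∧ t₁ ≤ 1 ∧ 0 < t₂ ∧ t₂ ≤ 1 ∧
        t₁ ^ 2 - t₁ ^ 4 = t₂ ^ 2 - t₂ ^ 4 ∧ 1 / t₁ - 1 / t₂ = γ * Real.sqrt ω)
      ↔ (t₁ = s₁ ∧ t₂ = s₂)) ∧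
    0 < s₁ ∧ s₁ < s₂ ∧ s₂ < 1 ∧ s₁ ^ 2 + s₂ ^ 2 = 1 := by
  set g := γ * √ω
  have hg : 0 < g := by positivity
  have hsq : γ ^ 2 * ω = g ^ 2 := by rw [mul_pow, Real.sq_sqrt hω.le]
  obtain rfl : s₁ = tPlusLeft g := by rw [hs₁, hsq, tPlusLeft, mul_assoc]
  obtain rfl : s₂ = tPlusRight g := by rw [hs₂, hsq, tPlusRight, mul_assoc]
  have hs₁ := tPlusLeft_pos hg
  have hlt := tPlusLeft_lt_tPlusRight hg
  have hs₂ := tPlusRight_lt_one hg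
  have hsum := tPlusLeft_sq_add_tPlusRight_sq hg
  have hsq_ne : tPlusLeft g ^ 2 ≠ tPlusRight g ^ 2 := (pow_lt_pow_left₀ hlt hs₁.le two_ne_zero).ne
  refine ⟨fun t₁ t₂ => ⟨?_, ?_⟩, hs₁, hlt, hs₂, hsum⟩
  · rintro ⟨ht₁, -, ht₂, -, hquartic, hrecip⟩
    rw [one_div_sub_one_div_eq_iff ht₁.ne' ht₂.ne'] at hrecip
    have htlt : t₁ < t₂ := by nlinarith [mul_pos hg (mul_pos ht₁ ht₂)]
    rw [sq_sub_pow_four_eq_iff (pow_lt_pow_left₀ htlt ht₁.le two_ne_zero).ne] at hquartic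
    exact eq_of_sq_add_sq_eq_one_of_sub_eq_mul ht₁ ht₂ hquartic hrecip hs₁ (hs₁.trans hlt) hsum
      (tPlusRight_sub_tPlusLeft hg)
  · rintro ⟨rfl, rfl⟩
    exact ⟨hs₁, (hlt.trans hs₂).le, hs₁.trans hlt, hs₂.le, (sq_sub_pow_four_eq_iff hsq_ne).mpr hsum,
      (one_div_sub_one_div_eq_iff hs₁.ne' (hs₁.trans hlt).ne').mpr (tPlusRight_sub_tPlusLeft hg)⟩

end
end

section
/- Let γ > 0 and ω > 8/γ². Set t₊ := (1 + √(1 + γ²ω) + √(γ²ω − 2 − 2√(1 + γ²ω)))/(2γ√ω) and t₋ := (1 + √(1 + γ²ω) − √(γ²ω − 2 − 2√(1 + γ²ω)))/(2γ√ω). Then the set of solutions (t₁, t₂) with 0 < t₁ < 1, 0 < t₂ < 1 of the system t₁² − t₁⁴ = t₂² − t₂⁴, 1/t₁ + 1/t₂ = γ√ω is exactly {(2/(γ√ω), 2/(γ√ω)), (t₊, t₋), (t₋, t₊)}; in particular t₊² + t₋² = 1 and 0 < t₋ < t₊ < 1. -/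
/-!
Write `s = γ√ω`, so that the second equation reads `t₁ + t₂ = s t₁ t₂`. The first equation factors as
`(t₁ - t₂)(t₁ + t₂)(1 - t₁² - t₂²) = 0`. On the diagonal `t₁ = t₂ = 2/s`. Off it, `t₁² + t₂² = 1`,
and the product `π = t₁t₂` solves `s²π² - 2π - 1 = 0`, whose only positive root is `(1 + √(1 + s²))/s²`;
then the sum is `sπ`, and `t₁, t₂` are the two roots `t±` of the quadratic with this sum and product.
Its discriminant is `(s² - 2 - 2√(1 + s²))/s²`, positive exactly when `s² > 8`.
-/

open Real

noncomputable section

lemma sq_sub_pow_four_eq_sq_sub_pow_four_iff {a b : ℝ} (ha : 0 < a) (hb : 0 < b) :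
    a ^ 2 - a ^ 4 = b ^ 2 - b ^ 4 ↔ a = b ∨ a ^ 2 + b ^ 2 = 1 := by
  constructor
  · intro h
    have hfac : (a - b) * ((a + b) * (1 - a ^ 2 - b ^ 2)) = 0 := by linear_combination h
    rcases mul_eq_zero.mp hfac with h | h
    · exact Or.inl (sub_eq_zero.mp h)
    · rcases mul_eq_zero.mp h with h | h
      · linarith
      · exact Or.inr (by linarith)
  · rintro (rfl | h)
    · rfl
    · linear_combination (b ^ 2 - a ^ 2) * h

lemma one_div_add_one_div_eq_iff {a b s : ℝ} (ha : a ≠ 0) (hb : b ≠ 0) :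
    1 / a + 1 / b = s ↔ a + b = s * (a * b) := by
  rw [div_add_div _ _ ha hb, div_eq_iff (mul_ne_zero ha hb)]
  constructor <;> intro h <;> linarith

lemma pair_eq_or_eq_swap_of_add_eq_of_mul_eq {R : Type*} [CommRing R] [IsDomain R]
    {x y a b : R} (hsum : x + y = a + b) (hprod : x * y = a * b) :
    (x, y) = (a, b) ∨ (x, y) = (b, a) := by
  have hroot : (x - a) * (x - b) = 0 := by linear_combination x * hsum - hprod
  rcases mul_eq_zero.mp hroot with h | h
  · exact Or.inl (Prod.ext (sub_eq_zero.mp h) (by linear_combination hsum - h))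
  · exact Or.inr (Prod.ext (sub_eq_zero.mp h) (by linear_combination hsum - h))

lemma mul_eq_of_sq_add_sq_eq_one {a b s : ℝ} (ha : 0 < a) (hb : 0 < b)
    (hcirc : a ^ 2 + b ^ 2 = 1) (hsum : a + b = s * (a * b)) :
    a * b = (1 + √(1 + s ^ 2)) / s ^ 2 := by
  have hab : 0 < a * b := mul_pos ha hb
  have hs : 0 < s := pos_of_mul_pos_left (hsum ▸ add_pos ha hb) hab.le
  have hquad : (s ^ 2 * (a * b) - 1) ^ 2 = 1 + s ^ 2 := by
    linear_combination s ^ 2 * hcirc - s ^ 2 * (s * (a * b) + a + b) * hsum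
  have hnonneg : 0 ≤ s ^ 2 * (a * b) - 1 := by nlinarith [mul_pos (pow_pos hs 2) hab]
  rw [← hquad, sqrt_sq hnonneg]
  field_simp
  ring

section Roots

variable {s : ℝ}

/-- `t₊` as a function of `s = γ√ω`, with `γ²ω` written as `s²`. -/
def tPlus (s : ℝ) : ℝ := (1 + √(1 + s ^ 2) + √(s ^ 2 - 2 - 2 * √(1 + s ^ 2))) / (2 * s)

def tMinus (s : ℝ) : ℝ := (1 + √(1 + s ^ 2) - √(s ^ 2 - 2 - 2 * √(1 + s ^ 2))) / (2 * s)

lemma three_lt_sqrt_one_add_sq (h8 : 8 < s ^ 2) : 3 < √(1 + s ^ 2) :=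
  lt_sqrt_of_sq_lt (by linarith)

lemma sq_sub_two_sub_two_mul_sqrt_pos (h8 : 8 < s ^ 2) : 0 < s ^ 2 - 2 - 2 * √(1 + s ^ 2) := by
  have hu := three_lt_sqrt_one_add_sq h8
  have hu2 : √(1 + s ^ 2) ^ 2 = 1 + s ^ 2 := sq_sqrt (by positivity)
  nlinarith

lemma tPlus_add_tMinus (hs : s ≠ 0) : tPlus s + tMinus s = (1 + √(1 + s ^ 2)) / s := by
  unfold tPlus tMinus
  field_simp
  ring

lemma tPlus_mul_tMinus (h8 : 8 < s ^ 2) : tPlus s * tMinus s = (1 + √(1 + s ^ 2)) / s ^ 2 := by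
  have hs : s ≠ 0 := by rintro rfl; norm_num at h8
  have hu2 : √(1 + s ^ 2) ^ 2 = 1 + s ^ 2 := sq_sqrt (by positivity)
  have hd2 := sq_sqrt (sq_sub_two_sub_two_mul_sqrt_pos h8).le
  unfold tPlus tMinus
  generalize √(s ^ 2 - 2 - 2 * √(1 + s ^ 2)) = d at hd2 ⊢
  field_simp
  linear_combination hu2 - hd2

lemma tPlus_sq_add_tMinus_sq (h8 : 8 < s ^ 2) : tPlus s ^ 2 + tMinus s ^ 2 = 1 := by
  have hs : s ≠ 0 := by rintro rfl; norm_num at h8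
  have hu2 : √(1 + s ^ 2) ^ 2 = 1 + s ^ 2 := sq_sqrt (by positivity)
  have hsq : tPlus s ^ 2 + tMinus s ^ 2 = (tPlus s + tMinus s) ^ 2 - 2 * (tPlus s * tMinus s) := by
    ring
  rw [hsq, tPlus_add_tMinus hs, tPlus_mul_tMinus h8]
  field_simp
  linear_combination hu2

lemma tMinus_pos (hs : 0 < s) (h8 : 8 < s ^ 2) : 0 < tMinus s := by
  have hu := three_lt_sqrt_one_add_sq h8
  have hd : √(s ^ 2 - 2 - 2 * √(1 + s ^ 2)) < 1 + √(1 + s ^ 2) := by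
    rw [sqrt_lt' (by linarith)]
    nlinarith [sq_sqrt (show (0 : ℝ) ≤ 1 + s ^ 2 by positivity)]
  exact div_pos (by linarith) (by linarith)

lemma tMinus_lt_tPlus (hs : 0 < s) (h8 : 8 < s ^ 2) : tMinus s < tPlus s := by
  have hd := sqrt_pos.mpr (sq_sub_two_sub_two_mul_sqrt_pos h8)
  unfold tPlus tMinus
  gcongr
  linarith

lemma tPlus_lt_one (hs : 0 < s) (h8 : 8 < s ^ 2) : tPlus s < 1 := by
  have hm := tMinus_pos hs h8
  have hp : 0 < tPlus s := hm.trans (tMinus_lt_tPlus hs h8)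
  nlinarith [tPlus_sq_add_tMinus_sq h8]

lemma one_div_tPlus_add_one_div_tMinus (hs : 0 < s) (h8 : 8 < s ^ 2) :
    1 / tPlus s + 1 / tMinus s = s := by
  have hm := tMinus_pos hs h8
  have hp : 0 < tPlus s := hm.trans (tMinus_lt_tPlus hs h8)
  rw [one_div_add_one_div_eq_iff hp.ne' hm.ne', tPlus_add_tMinus hs.ne', tPlus_mul_tMinus h8]
  field_simp

end Roots

theorem solutionSet_eq (s : ℝ) (hs : 0 < s) (h8 : 8 < s ^ 2) :
    {p : ℝ × ℝ | 0 < p.1 ∧ p.1 < 1 ∧ 0 < p.2 ∧ p.2 < 1 ∧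
        p.1 ^ 2 - p.1 ^ 4 = p.2 ^ 2 - p.2 ^ 4 ∧ 1 / p.1 + 1 / p.2 = s}
      = {(2 / s, 2 / s), (tPlus s, tMinus s), (tMinus s, tPlus s)} := by
  ext ⟨a, b⟩
  simp only [Set.mem_ofPred_eq, Set.mem_insert_iff, Set.mem_singleton_iff, Prod.mk.injEq]
  constructor
  · rintro ⟨ha, -, hb, -, hquart, hrecip⟩
    rw [one_div_add_one_div_eq_iff ha.ne' hb.ne'] at hrecip
    rcases (sq_sub_pow_four_eq_sq_sub_pow_four_iff ha hb).mp hquart with rfl | hcirc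
    · have hdiag : a = 2 / s := by
        rw [eq_div_iff hs.ne']
        exact mul_left_cancel₀ ha.ne' (by linear_combination -hrecip)
      exact Or.inl ⟨hdiag, hdiag⟩
    · have hprod : a * b = tPlus s * tMinus s := by
        rw [mul_eq_of_sq_add_sq_eq_one ha hb hcirc hrecip, tPlus_mul_tMinus h8]
      have hsum : a + b = tPlus s + tMinus s := by
        rw [hrecip, hprod, tPlus_add_tMinus hs.ne', tPlus_mul_tMinus h8]
        field_simp
      simpa only [Prod.mk.injEq] using Or.inr (pair_eq_or_eq_swap_of_add_eq_of_mul_eq hsum hprod)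
  · have hm := tMinus_pos hs h8
    have hp := tPlus_lt_one hs h8
    have hmp := tMinus_lt_tPlus hs h8
    have hcirc := tPlus_sq_add_tMinus_sq h8
    have hrecip := one_div_tPlus_add_one_div_tMinus hs h8
    rintro (⟨rfl, rfl⟩ | ⟨rfl, rfl⟩ | ⟨rfl, rfl⟩)
    · have h2 : 2 < s := by nlinarith
      refine ⟨by positivity, (div_lt_one hs).mpr h2, by positivity, (div_lt_one hs).mpr h2, rfl, ?_⟩
      rw [one_div_div]
      ring
    · exact ⟨by linarith, hp, hm, by linarith,
        (sq_sub_pow_four_eq_sq_sub_pow_four_iff (by linarith) hm).mpr (Or.inr hcirc), hrecip⟩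
    · exact ⟨hm, by linarith, by linarith, hp,
        (sq_sub_pow_four_eq_sq_sub_pow_four_iff hm (by linarith)).mpr (Or.inr (by linarith)),
        by rw [add_comm, hrecip]⟩

/-- For ω > 8/γ², the solution set of the system T₋ with 0 < t₁ < 1, 0 < t₂ < 1 consists
exactly of the symmetric solution (2/(γ√ω), 2/(γ√ω)) and the asymmetric pair (t₊, t₋), (t₋, t₊);
moreover t₊² + t₋² = 1 and 0 < t₋ < t₊ < 1. -/
theorem statement6 (γ ω : ℝ) (hγ : 0 < γ) (hω : 8 / γ ^ 2 < ω)
    (tp tm : ℝ)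
    (htp : tp = (1 + Real.sqrt (1 + γ ^ 2 * ω)
        + Real.sqrt (γ ^ 2 * ω - 2 - 2 * Real.sqrt (1 + γ ^ 2 * ω)))
      / (2 * γ * Real.sqrt ω))
    (htm : tm = (1 + Real.sqrt (1 + γ ^ 2 * ω)
        - Real.sqrt (γ ^ 2 * ω - 2 - 2 * Real.sqrt (1 + γ ^ 2 * ω)))
      / (2 * γ * Real.sqrt ω)) :
    {p : ℝ × ℝ | 0 < p.1 ∧ p.1 < 1 ∧ 0 < p.2 ∧ p.2 < 1 ∧
        p.1 ^ 2 - p.1 ^ 4 = p.2 ^ 2 - p.2 ^ 4 ∧ 1 / p.1 + 1 / p.2 = γ * Real.sqrt ω}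
      = {(2 / (γ * Real.sqrt ω), 2 / (γ * Real.sqrt ω)), (tp, tm), (tm, tp)} ∧
    tp ^ 2 + tm ^ 2 = 1 ∧ 0 < tm ∧ tm < tp ∧ tp < 1 := by
  have hω0 : 0 < ω := lt_trans (by positivity) hω
  have hs : 0 < γ * √ω := mul_pos hγ (sqrt_pos.mpr hω0)
  have hs2 : (γ * √ω) ^ 2 = γ ^ 2 * ω := by rw [mul_pow, sq_sqrt hω0.le]
  have h8 : 8 < (γ * √ω) ^ 2 := by rwa [hs2, ← div_lt_iff₀' (by positivity)]
  have htp' : tp = tPlus (γ * √ω) := by rw [htp, tPlus, hs2, mul_assoc]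
  have htm' : tm = tMinus (γ * √ω) := by rw [htm, tMinus, hs2, mul_assoc]
  rw [htp', htm']
  exact ⟨solutionSet_eq _ hs h8, tPlus_sq_add_tMinus_sq h8, tMinus_pos hs h8,
    tMinus_lt_tPlus hs h8, tPlus_lt_one hs h8⟩

end
end

section
/- Let γ > 0, λ > 0 and ω > 4/γ². Set x̄ := (1/(2√ω))·log((γ√ω + 2)/(γ√ω − 2)) and define ψ(x) := −√(2ω/λ)·sech(√ω(x − x̄)) for x < 0 and ψ(x) := √(2ω/λ)·sech(√ω(x + x̄)) for x > 0. Then ψ satisfies −ψ''(x) + ωψ(x) − λψ(x)³ = 0 for all x ≠ 0, ψ'(0+) = ψ'(0−), and ψ(0+) − ψ(0−) = −γψ'(0+); i.e., ψ is an antisymmetric stationary state of the cubic NLS with a delta-prime interaction of strength γ. -/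
open MeasureTheory Real Filter Set Topology

noncomputable section

/-!
On each half-line `ψ` is a translate of the soliton `±√(2ω/λ) sech(√ω x)`, which solves
`−u'' + ωu − λu³ = 0` on all of `ℝ`. The two translates are mirror images under `x ↦ −x`, so
`ψ` is odd and `ψ'` has equal one-sided limits at `0`. With `t = √ω x̄` the jump condition
reduces to `γ√ω tanh t = 2`, and `x̄` is chosen precisely so that `t = artanh (2 / (γ√ω))`.
-/

lemma contDiff_sech {n : WithTop ℕ∞} : ContDiff ℝ n sech :=
  contDiff_const.div contDiff_cosh fun x => (cosh_pos x).ne'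

lemma hasDerivAt_sech_s9 (x : ℝ) : HasDerivAt sech (-sinh x / cosh x ^ 2) x := by
  have hsech : sech = fun y => (cosh y)⁻¹ := funext fun y => one_div _
  exact hsech ▸ (hasDerivAt_cosh x).inv (cosh_pos x).ne'

lemma tendsto_nhdsWithin_of_eqOn {α β : Type*} [TopologicalSpace α] [TopologicalSpace β]
    {ψ f : α → β} {s : Set α} {a : α} (h : EqOn ψ f s)
    (hf : ContinuousAt f a) : Tendsto ψ (𝓝[s] a) (𝓝 (f a)) :=
  tendsto_nhdsWithin_congr (fun _ hx => (h hx).symm) (hf.tendsto.mono_left nhdsWithin_le_nhds)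

def soliton (A b c : ℝ) (y : ℝ) : ℝ := A * sech (b * (y + c))

section Soliton

variable (A b c : ℝ)

lemma contDiff_soliton {n : WithTop ℕ∞} : ContDiff ℝ n (soliton A b c) :=
  contDiff_const.mul (contDiff_sech.comp (contDiff_const.mul (contDiff_id.add contDiff_const)))

lemma continuous_soliton : Continuous (soliton A b c) :=
  (contDiff_soliton A b c (n := 0)).continuous

lemma continuous_deriv_soliton : Continuous (deriv (soliton A b c)) :=
  (contDiff_soliton A b c (n := 1)).continuous_deriv le_rfl

lemma deriv_soliton :
    deriv (soliton A b c) = fun y => -(A * b) * sinh (b * (y + c)) / cosh (b * (y + c)) ^ 2 := by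
  funext y
  have hlin : HasDerivAt (fun y => b * (y + c)) b y := by
    simpa using ((hasDerivAt_id y).add_const c).const_mul b
  refine (((hasDerivAt_sech_s9 _).comp y hlin).const_mul A).deriv.trans ?_
  ring

lemma deriv_deriv_soliton (y : ℝ) :
    deriv (deriv (soliton A b c)) y =
      A * b ^ 2 * (2 * sinh (b * (y + c)) ^ 2 - cosh (b * (y + c)) ^ 2) / cosh (b * (y + c)) ^ 3 := by
  have hlin : HasDerivAt (fun y => b * (y + c)) b y := by
    simpa using ((hasDerivAt_id y).add_const c).const_mul b
  have hc : cosh (b * (y + c)) ≠ 0 := (cosh_pos _).ne'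
  rw [deriv_soliton]
  refine ((((hasDerivAt_sinh _).comp y hlin).const_mul _).div
    (((hasDerivAt_cosh _).comp y hlin).pow 2) (pow_ne_zero 2 hc)).deriv.trans ?_
  simp only [Function.comp_apply, Pi.pow_apply]
  field_simp
  ring

lemma soliton_solves_nls {ω lam : ℝ} (hb : b ^ 2 = ω) (hA : lam * A ^ 2 = 2 * ω) (y : ℝ) :
    -deriv (deriv (soliton A b c)) y + ω * soliton A b c y - lam * soliton A b c y ^ 3 = 0 := by
  have hc : cosh (b * (y + c)) ≠ 0 := (cosh_pos _).ne'
  rw [deriv_deriv_soliton, soliton, sech]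
  field_simp
  linear_combination (-A) * ((2 * sinh (b * (y + c)) ^ 2 - cosh (b * (y + c)) ^ 2) * hb + hA
    - 2 * ω * cosh_sq (b * (y + c)))

lemma deriv_soliton_neg_zero : deriv (soliton (-A) b (-c)) 0 = deriv (soliton A b c) 0 := by
  simp only [deriv_soliton, zero_add, mul_neg, sinh_neg, cosh_neg]
  ring

lemma soliton_jump {γ : ℝ} (h : γ * b * sinh (b * c) = 2 * cosh (b * c)) :
    soliton A b c 0 - soliton (-A) b (-c) 0 = -γ * deriv (soliton A b c) 0 := by
  have hc : cosh (b * c) ≠ 0 := (cosh_pos _).ne'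
  simp only [soliton, deriv_soliton, sech, zero_add, mul_neg, cosh_neg]
  field_simp
  linear_combination -A * h

/-- That is, `tanh t = 2 / s` for `t = artanh (2 / s)` written through the logarithm. -/
lemma mul_sinh_half_log {s : ℝ} (hs : 2 < s) :
    s * sinh (log ((s + 2) / (s - 2)) / 2) = 2 * cosh (log ((s + 2) / (s - 2)) / 2) := by
  set t := log ((s + 2) / (s - 2)) / 2
  have hexp : exp t ^ 2 * (s - 2) = s + 2 := by
    rw [← exp_nat_mul, show ((2 : ℕ) : ℝ) * t = log ((s + 2) / (s - 2)) by push_cast; ring,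
      exp_log (by apply div_pos <;> linarith)]
    field_simp [show s - 2 ≠ 0 by linarith]
  rw [sinh_eq, cosh_eq, exp_neg]
  field_simp
  linear_combination hexp

end Soliton

lemma two_lt_mul_sqrt {γ ω : ℝ} (hγ : 0 < γ) (hω : 4 / γ ^ 2 < ω) : 2 < γ * √ω := by
  have hω0 : 0 ≤ ω := (by positivity : (0 : ℝ) ≤ 4 / γ ^ 2).trans hω.le
  refine lt_of_pow_lt_pow_left₀ 2 (by positivity) ?_
  rw [mul_pow, sq_sqrt hω0, ← div_lt_iff₀' (by positivity)]
  norm_num [hω]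

/-- The antisymmetric stationary state of the cubic NLS with a delta-prime interaction of
strength γ, for ω > 4/γ²: it solves −ψ'' + ωψ − λψ³ = 0 away from the origin, and satisfies
ψ'(0+) = ψ'(0−) and ψ(0+) − ψ(0−) = −γψ'(0+). -/
theorem statement9 (γ lam ω : ℝ) (hγ : 0 < γ) (hlam : 0 < lam) (hω : 4 / γ ^ 2 < ω)
    (xbar : ℝ)
    (hxbar : xbar = (1 / (2 * Real.sqrt ω)) *
      Real.log ((γ * Real.sqrt ω + 2) / (γ * Real.sqrt ω - 2)))
    (ψ : ℝ → ℝ)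
    (hψ : ∀ x, ψ x = if x < 0
      then -(Real.sqrt (2 * ω / lam) * sech (Real.sqrt ω * (x - xbar)))
      else Real.sqrt (2 * ω / lam) * sech (Real.sqrt ω * (x + xbar))) :
    (∀ x : ℝ, x ≠ 0 → -(deriv (deriv ψ) x) + ω * ψ x - lam * (ψ x) ^ 3 = 0) ∧
    (∃ d : ℝ,
      Tendsto (deriv ψ) (𝓝[>] 0) (𝓝 d) ∧
      Tendsto (deriv ψ) (𝓝[<] 0) (𝓝 d) ∧
      ∃ p m : ℝ,
        Tendsto ψ (𝓝[>] 0) (𝓝 p) ∧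
        Tendsto ψ (𝓝[<] 0) (𝓝 m) ∧
        p - m = -γ * d) := by
  have hω0 : 0 < ω := (by positivity : (0 : ℝ) < 4 / γ ^ 2).trans hω
  set b := √ω
  set A := √(2 * ω / lam)
  have hb : b ^ 2 = ω := sq_sqrt hω0.le
  have hA : lam * A ^ 2 = 2 * ω := by
    rw [sq_sqrt (by positivity)]
    field_simp
  have hA' : lam * (-A) ^ 2 = 2 * ω := by rwa [neg_sq]
  have hright : EqOn ψ (soliton A b xbar) (Ioi 0) := fun x (hx : 0 < x) => by
    simp [hψ x, soliton, not_lt.2 hx.le]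
  have hleft : EqOn ψ (soliton (-A) b (-xbar)) (Iio 0) := fun x hx => by
    simp [hψ x, soliton, show x < 0 from hx, sub_eq_add_neg]
  refine ⟨fun x hx => ?_, deriv (soliton A b xbar) 0, ?_, ?_,
    soliton A b xbar 0, soliton (-A) b (-xbar) 0, ?_, ?_, ?_⟩
  · rcases hx.lt_or_gt with hx | hx
    · rw [(hleft.deriv isOpen_Iio).deriv isOpen_Iio hx, hleft hx]
      exact soliton_solves_nls _ _ _ hb hA' x
    · rw [(hright.deriv isOpen_Ioi).deriv isOpen_Ioi hx, hright hx]
      exact soliton_solves_nls _ _ _ hb hA x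
  · exact tendsto_nhdsWithin_of_eqOn (hright.deriv isOpen_Ioi)
      (continuous_deriv_soliton _ _ _).continuousAt
  · exact deriv_soliton_neg_zero A b xbar ▸ tendsto_nhdsWithin_of_eqOn (hleft.deriv isOpen_Iio)
      (continuous_deriv_soliton _ _ _).continuousAt
  · exact tendsto_nhdsWithin_of_eqOn hright (continuous_soliton _ _ _).continuousAt
  · exact tendsto_nhdsWithin_of_eqOn hleft (continuous_soliton _ _ _).continuousAt
  · have hbxbar : b * xbar = log ((γ * b + 2) / (γ * b - 2)) / 2 := by
      have hb0 : b ≠ 0 := (sqrt_pos.2 hω0).ne'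
      rw [hxbar]
      field_simp
    apply soliton_jump
    simpa only [hbxbar] using mul_sinh_half_log (two_lt_mul_sqrt hγ hω)

end
end

section
/- Let γ > 0, λ > 0, ω > 0, and let ψ be the asymmetric non-sign-changing stationary state: ψ(x) = √(2ω/λ)·sech(√ω(x − x₁)) for x < 0 and ψ(x) = √(2ω/λ)·sech(√ω(x − x₂)) for x > 0, where x_i = (1/(2√ω))·log((1 + t_i)/(1 − t_i)) with t₁ = (1 − √(1 + γ²ω) + √(γ²ω − 2 + 2√(1 + γ²ω)))/(2γ√ω), t₂ = (−1 + √(1 + γ²ω) + √(γ²ω − 2 + 2√(1 + γ²ω)))/(2γ√ω). Then: (i) ∫_ℝ ψ² dx = 4√ω/λ + (2/(λγ))√(1 + γ²ω) − 2/(λγ); (ii) E_{γδ'}(ψ) = −(2/(3λ))ω^{3/2} + ((2 − γ²ω)/(3λγ³))·√(γ²ω + 1) − 2/(3λγ³); (iii) S_ω(ψ) := E_{γδ'}(ψ) + (ω/2)∫_ℝ ψ² dx = (4/(3λ))ω^{3/2} + (2/(3λγ³))(γ²ω + 1)^{3/2} − ω/(λγ) − 2/(3λγ³). -/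
open MeasureTheory Real Filter Set Topology

noncomputable section

/-!
On each half-line `ψ` is a translate of the soliton `√(2ω/λ) sech(√ω x)`. Each integrand of the
action is then a polynomial in `tanh(√ω (x - xᵢ))` times `sech²(√ω (x - xᵢ))`, and the substitution
`y = tanh(√ω (x - xᵢ))` integrates it over a half-line in closed form, in terms of the boundary
value `tanh(√ω xᵢ) = tᵢ` alone. The numbers `t₁, t₂` are positive with `t₁² + t₂² = 1` and
`γ√ω (t₂ - t₁) = γ²ω t₁t₂ = √(1 + γ²ω) - 1`; these relations reduce the resulting expressions
to the stated closed forms.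
-/

lemma sech_neg (x : ℝ) : sech (-x) = sech x := by
  rw [sech, sech, cosh_neg]

lemma sech_sq (x : ℝ) : sech x ^ 2 = 1 - tanh x ^ 2 := by
  have := cosh_sq_sub_sinh_sq x
  have := (cosh_pos x).ne'
  unfold sech
  rw [tanh_eq_sinh_div_cosh]
  field_simp
  linarith

lemma tendsto_tanh_atBot : Tendsto tanh atBot (𝓝 (-1)) := by
  simpa [Function.comp_def, tanh_neg] using (tendsto_tanh_atTop.comp tendsto_neg_atBot_atTop).neg

lemma sech_artanh {t : ℝ} (ht : t ∈ Ioo (-1) 1) : sech (artanh t) = √(1 - t ^ 2) := by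
  rw [sech, cosh_artanh ht, one_div_one_div]

theorem integrableOn_Iic_deriv_of_nonneg' {g g' : ℝ → ℝ} {a l : ℝ}
    (hderiv : ∀ x ∈ Iic a, HasDerivAt g (g' x) x) (g'pos : ∀ x ∈ Iio a, 0 ≤ g' x)
    (hg : Tendsto g atBot (𝓝 l)) : IntegrableOn g' (Iic a) := by
  have hderiv' : ∀ x ∈ Ici (-a), HasDerivAt (fun x => -g (-x)) (g' (-x)) x := fun x hx =>
    (((hderiv (-x) (neg_le.mp (mem_Ici.mp hx))).comp x (hasDerivAt_neg x)).neg).congr_deriv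
      (by ring)
  have hint := integrableOn_Ioi_deriv_of_nonneg' hderiv'
    (fun x hx => g'pos (-x) (neg_lt.mp (mem_Ioi.mp hx))) (hg.comp tendsto_neg_atTop_atBot).neg
  have := (MeasurePreserving.integrableOn_comp_preimage (Measure.measurePreserving_neg _)
      (Homeomorph.neg ℝ).measurableEmbedding).2 hint
  rw [integrableOn_Iic_iff_integrableOn_Iio]
  simpa [Function.comp_def] using this

theorem integral_Iic_of_hasDerivAt_of_nonneg' {g g' : ℝ → ℝ} {a l : ℝ}
    (hderiv : ∀ x ∈ Iic a, HasDerivAt g (g' x) x) (g'pos : ∀ x ∈ Iio a, 0 ≤ g' x)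
    (hg : Tendsto g atBot (𝓝 l)) : ∫ x in Iic a, g' x = g a - l :=
  integral_Iic_of_hasDerivAt_of_tendsto' hderiv
    (integrableOn_Iic_deriv_of_nonneg' hderiv g'pos hg) hg

section HasIntegralOn

variable {α E : Type*} [MeasurableSpace α] [NormedAddCommGroup E] [NormedSpace ℝ E]
  {μ : Measure α} {f g : α → E} {s t : Set α} {I J : E}

def HasIntegralOn (f : α → E) (s : Set α) (I : E) (μ : Measure α := by volume_tac) : Prop :=
  IntegrableOn f s μ ∧ ∫ x in s, f x ∂μ = I

lemma HasIntegralOn.congr (h : HasIntegralOn f s I μ) (hs : MeasurableSet s) (hfg : EqOn f g s) :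
    HasIntegralOn g s I μ :=
  ⟨h.1.congr_fun hfg hs, (setIntegral_congr_fun hs hfg).symm.trans h.2⟩

lemma HasIntegralOn.union (hs : HasIntegralOn f s I μ) (ht : HasIntegralOn f t J μ)
    (hst : Disjoint s t) (ht' : MeasurableSet t) : HasIntegralOn f (s ∪ t) (I + J) μ :=
  ⟨hs.1.union ht.1, by rw [setIntegral_union hst ht' hs.1 ht.1, hs.2, ht.2]⟩

lemma HasIntegralOn.compl_singleton {f : ℝ → E} {a : ℝ} (h₁ : HasIntegralOn f (Iio a) I)
    (h₂ : HasIntegralOn f (Ioi a) J) : HasIntegralOn f {a}ᶜ (I + J) :=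
  Iio_union_Ioi (a := a) ▸ h₁.union h₂ Ioi_disjoint_Iio_same.symm measurableSet_Ioi

end HasIntegralOn

lemma hasDerivAt_mul_sub (c b x : ℝ) : HasDerivAt (fun x => c * (x - b)) c x := by
  simpa using ((hasDerivAt_id x).sub_const b).const_mul c

lemma tendsto_mul_sub_atTop {c : ℝ} (hc : 0 < c) (b : ℝ) :
    Tendsto (fun x => c * (x - b)) atTop atTop :=
  (tendsto_atTop_add_const_right _ (-b) tendsto_id).const_mul_atTop hc

lemma tendsto_mul_sub_atBot {c : ℝ} (hc : 0 < c) (b : ℝ) :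
    Tendsto (fun x => c * (x - b)) atBot atBot :=
  (tendsto_atBot_add_const_right _ (-b) tendsto_id).const_mul_atBot hc

section TanhSubstitution

variable {g G : ℝ → ℝ} {c : ℝ}

lemma hasDerivAt_comp_tanh_div (hG : ∀ y, HasDerivAt G (g y) y) (hc : c ≠ 0) (b x : ℝ) :
    HasDerivAt (fun x => G (tanh (c * (x - b))) / c)
      (g (tanh (c * (x - b))) * sech (c * (x - b)) ^ 2) x := by
  have h := (hG _).comp x ((hasDerivAt_tanh _).comp x (hasDerivAt_mul_sub c b x))
  refine (h.div_const c).congr_deriv ?_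
  simp only [Function.comp_apply]
  field_simp

lemma comp_tanh_mul_sech_sq_nonneg (hg : ∀ y ∈ Ioo (-1) 1, 0 ≤ g y) (u : ℝ) :
    0 ≤ g (tanh u) * sech u ^ 2 :=
  mul_nonneg (hg _ ⟨neg_one_lt_tanh u, tanh_lt_one u⟩) (sq_nonneg _)

lemma hasIntegralOn_Ioi_comp_tanh_mul_sech_sq (hG : ∀ y, HasDerivAt G (g y) y)
    (hg : ∀ y ∈ Ioo (-1) 1, 0 ≤ g y) (hc : 0 < c) (a b : ℝ) :
    HasIntegralOn (fun x => g (tanh (c * (x - b))) * sech (c * (x - b)) ^ 2) (Ioi a)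
      ((G 1 - G (tanh (c * (a - b)))) / c) := by
  have hderiv := fun x (_ : x ∈ Ici a) => hasDerivAt_comp_tanh_div hG hc.ne' b x
  have hnonneg := fun x (_ : x ∈ Ioi a) => comp_tanh_mul_sech_sq_nonneg hg (c * (x - b))
  have hlim : Tendsto (fun x => G (tanh (c * (x - b))) / c) atTop (𝓝 (G 1 / c)) :=
    (((hG 1).continuousAt.tendsto.comp tendsto_tanh_atTop).comp
      (tendsto_mul_sub_atTop hc b)).div_const c
  refine ⟨integrableOn_Ioi_deriv_of_nonneg' hderiv hnonneg hlim, ?_⟩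
  rw [integral_Ioi_of_hasDerivAt_of_nonneg' hderiv hnonneg hlim, sub_div]

lemma hasIntegralOn_Iio_comp_tanh_mul_sech_sq (hG : ∀ y, HasDerivAt G (g y) y)
    (hg : ∀ y ∈ Ioo (-1) 1, 0 ≤ g y) (hc : 0 < c) (a b : ℝ) :
    HasIntegralOn (fun x => g (tanh (c * (x - b))) * sech (c * (x - b)) ^ 2) (Iio a)
      ((G (tanh (c * (a - b))) - G (-1)) / c) := by
  have hderiv := fun x (_ : x ∈ Iic a) => hasDerivAt_comp_tanh_div hG hc.ne' b x
  have hnonneg := fun x (_ : x ∈ Iio a) => comp_tanh_mul_sech_sq_nonneg hg (c * (x - b))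
  have hlim : Tendsto (fun x => G (tanh (c * (x - b))) / c) atBot (𝓝 (G (-1) / c)) :=
    (((hG (-1)).continuousAt.tendsto.comp tendsto_tanh_atBot).comp
      (tendsto_mul_sub_atBot hc b)).div_const c
  refine ⟨(integrableOn_Iic_deriv_of_nonneg' hderiv hnonneg hlim).mono_set Iio_subset_Iic_self, ?_⟩
  rw [← integral_Iic_eq_integral_Iio, integral_Iic_of_hasDerivAt_of_nonneg' hderiv hnonneg hlim,
    sub_div]

lemma hasIntegralOn_Iio_Ioi_of_eq_comp_tanh {f : ℝ → ℝ} (hG : ∀ y, HasDerivAt G (g y) y)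
    (hg : ∀ y ∈ Ioo (-1) 1, 0 ≤ g y) (hc : 0 < c) {b : ℝ}
    (hf : ∀ x, g (tanh (c * (x - b))) * sech (c * (x - b)) ^ 2 = f x) (a : ℝ) :
    HasIntegralOn f (Iio a) ((G (tanh (c * (a - b))) - G (-1)) / c) ∧
      HasIntegralOn f (Ioi a) ((G 1 - G (tanh (c * (a - b)))) / c) :=
  ⟨(hasIntegralOn_Iio_comp_tanh_mul_sech_sq hG hg hc a b).congr measurableSet_Iio
      fun x _ => hf x,
    (hasIntegralOn_Ioi_comp_tanh_mul_sech_sq hG hg hc a b).congr measurableSet_Ioi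
      fun x _ => hf x⟩

end TanhSubstitution

lemma hasDerivAt_sech_profile (A c b x : ℝ) :
    HasDerivAt (fun x => A * sech (c * (x - b)))
      (-(A * c) * (sech (c * (x - b)) * tanh (c * (x - b)))) x :=
  (((hasDerivAt_sech _).comp x (hasDerivAt_mul_sub c b x)).const_mul A).congr_deriv (by ring)

section SechProfile

variable {c : ℝ}

lemma hasIntegralOn_sech_profile_sq (A : ℝ) (hc : 0 < c) (a b : ℝ) :
    HasIntegralOn (fun x => (A * sech (c * (x - b))) ^ 2) (Iio a)
        (A ^ 2 * (1 + tanh (c * (a - b))) / c) ∧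
      HasIntegralOn (fun x => (A * sech (c * (x - b))) ^ 2) (Ioi a)
        (A ^ 2 * (1 - tanh (c * (a - b))) / c) := by
  have hG (y : ℝ) : HasDerivAt (fun y => A ^ 2 * y) (A ^ 2) y := by
    simpa using (hasDerivAt_id y).const_mul (A ^ 2)
  have h := hasIntegralOn_Iio_Ioi_of_eq_comp_tanh hG (fun _ _ => sq_nonneg A) hc
    (f := fun x => (A * sech (c * (x - b))) ^ 2) (fun x => by ring) a
  exact ⟨by convert h.1 using 1; ring, by convert h.2 using 1; ring⟩

lemma hasIntegralOn_sech_profile_pow_four (A : ℝ) (hc : 0 < c) (a b : ℝ) :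
    HasIntegralOn (fun x => (A * sech (c * (x - b))) ^ 4) (Iio a)
        (A ^ 4 * (2 / 3 + tanh (c * (a - b)) - tanh (c * (a - b)) ^ 3 / 3) / c) ∧
      HasIntegralOn (fun x => (A * sech (c * (x - b))) ^ 4) (Ioi a)
        (A ^ 4 * (2 / 3 - tanh (c * (a - b)) + tanh (c * (a - b)) ^ 3 / 3) / c) := by
  have hG (y : ℝ) : HasDerivAt (fun y => A ^ 4 * (y - y ^ 3 / 3)) (A ^ 4 * (1 - y ^ 2)) y :=
    (((hasDerivAt_id y).sub ((hasDerivAt_pow 3 y).div_const 3)).const_mul (A ^ 4)).congr_deriv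
      (by ring)
  have hg (y : ℝ) (hy : y ∈ Ioo (-1) 1) : 0 ≤ A ^ 4 * (1 - y ^ 2) := by
    have : y ^ 2 < 1 := by nlinarith [hy.1, hy.2]
    positivity
  have h := hasIntegralOn_Iio_Ioi_of_eq_comp_tanh hG hg hc
    (f := fun x => (A * sech (c * (x - b))) ^ 4) (fun x => by rw [← sech_sq]; ring) a
  exact ⟨by convert h.1 using 1; ring, by convert h.2 using 1; ring⟩

lemma hasIntegralOn_deriv_sech_profile_sq (A : ℝ) (hc : 0 < c) (a b : ℝ) :
    HasIntegralOn (fun x => deriv (fun x => A * sech (c * (x - b))) x ^ 2) (Iio a)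
        (A ^ 2 * c * (1 + tanh (c * (a - b)) ^ 3) / 3) ∧
      HasIntegralOn (fun x => deriv (fun x => A * sech (c * (x - b))) x ^ 2) (Ioi a)
        (A ^ 2 * c * (1 - tanh (c * (a - b)) ^ 3) / 3) := by
  have hG (y : ℝ) :
      HasDerivAt (fun y => A ^ 2 * c ^ 2 * (y ^ 3 / 3)) (A ^ 2 * c ^ 2 * y ^ 2) y :=
    (((hasDerivAt_pow 3 y).div_const 3).const_mul (A ^ 2 * c ^ 2)).congr_deriv (by ring)
  have h := hasIntegralOn_Iio_Ioi_of_eq_comp_tanh hG (fun _ _ => by positivity) hc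
    (f := fun x => deriv (fun x => A * sech (c * (x - b))) x ^ 2)
    (fun x => by rw [(hasDerivAt_sech_profile A c b x).deriv]; ring) a
  exact ⟨by convert h.1 using 1; field_simp; ring, by convert h.2 using 1; field_simp⟩

end SechProfile

lemma integrals_two_sided_sech_profile {A c b₁ b₂ : ℝ} (hc : 0 < c) {ψ : ℝ → ℝ}
    (hψ : ∀ x, ψ x = if x < 0 then A * sech (c * (x - b₁)) else A * sech (c * (x - b₂))) :
    ∫ x, ψ x ^ 2 = A ^ 2 * (2 - tanh (c * b₁) + tanh (c * b₂)) / c ∧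
    ∫ x in {(0 : ℝ)}ᶜ, deriv ψ x ^ 2
      = A ^ 2 * c * (2 - tanh (c * b₁) ^ 3 + tanh (c * b₂) ^ 3) / 3 ∧
    ∫ x, ψ x ^ 4 = A ^ 4 * (4 / 3 - tanh (c * b₁) + tanh (c * b₁) ^ 3 / 3
      + tanh (c * b₂) - tanh (c * b₂) ^ 3 / 3) / c := by
  have h₁ : EqOn ψ (fun x => A * sech (c * (x - b₁))) (Iio 0) := fun x hx => by
    rw [hψ, if_pos (show x < 0 from hx)]
  have h₂ : EqOn ψ (fun x => A * sech (c * (x - b₂))) (Ioi 0) := fun x hx => by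
    rw [hψ, if_neg (not_lt.2 hx.le)]
  have split (F : ℝ → ℝ) {g₁ g₂ : ℝ → ℝ} {I J : ℝ} (hg₁ : HasIntegralOn g₁ (Iio 0) I)
      (hg₂ : HasIntegralOn g₂ (Ioi 0) J) (e₁ : EqOn F g₁ (Iio 0)) (e₂ : EqOn F g₂ (Ioi 0)) :
      ∫ x in {(0 : ℝ)}ᶜ, F x = I + J :=
    ((hg₁.congr measurableSet_Iio e₁.symm).compl_singleton (hg₂.congr measurableSet_Ioi e₂.symm)).2
  have hT (b : ℝ) : tanh (c * (0 - b)) = -tanh (c * b) := by rw [zero_sub, mul_neg, tanh_neg]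
  have hvol (F : ℝ → ℝ) : ∫ x, F x = ∫ x in {(0 : ℝ)}ᶜ, F x := by
    rw [restrict_compl_singleton]
  refine ⟨?_, ?_, ?_⟩
  · rw [hvol, split (ψ · ^ 2) (hasIntegralOn_sech_profile_sq A hc 0 b₁).1
      (hasIntegralOn_sech_profile_sq A hc 0 b₂).2 (fun x hx => congrArg (· ^ 2) (h₁ hx))
      (fun x hx => congrArg (· ^ 2) (h₂ hx)), hT, hT]
    ring
  · rw [split (deriv ψ · ^ 2) (hasIntegralOn_deriv_sech_profile_sq A hc 0 b₁).1
      (hasIntegralOn_deriv_sech_profile_sq A hc 0 b₂).2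
      (fun x hx => congrArg (· ^ 2) (h₁.deriv isOpen_Iio hx))
      (fun x hx => congrArg (· ^ 2) (h₂.deriv isOpen_Ioi hx)),
      hT, hT]
    ring
  · rw [hvol, split (ψ · ^ 4) (hasIntegralOn_sech_profile_pow_four A hc 0 b₁).1
      (hasIntegralOn_sech_profile_pow_four A hc 0 b₂).2 (fun x hx => congrArg (· ^ 4) (h₁ hx))
      (fun x hx => congrArg (· ^ 4) (h₂ hx)), hT, hT]
    ring

lemma tanh_sech_of_eq_half_log {c t x : ℝ} (hc : c ≠ 0) (ht : t ∈ Ioo (-1) 1)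
    (hx : x = 1 / (2 * c) * log ((1 + t) / (1 - t))) :
    tanh (c * x) = t ∧ sech (c * x) = √(1 - t ^ 2) := by
  have h : c * x = artanh t := by
    rw [hx, artanh_eq_half_log (Ioo_subset_Icc_self ht)]
    field_simp
  rw [h]
  exact ⟨tanh_artanh ht, sech_artanh ht⟩

lemma asymmetric_state_params {γ ω t₁ t₂ : ℝ} (hγ : 0 < γ) (hω : 0 < ω)
    (ht₁ : t₁ = (1 - √(1 + γ ^ 2 * ω) + √(γ ^ 2 * ω - 2 + 2 * √(1 + γ ^ 2 * ω))) / (2 * γ * √ω))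
    (ht₂ : t₂ = (-1 + √(1 + γ ^ 2 * ω) + √(γ ^ 2 * ω - 2 + 2 * √(1 + γ ^ 2 * ω))) / (2 * γ * √ω)) :
    0 < t₁ ∧ 0 < t₂ ∧ t₁ ^ 2 + t₂ ^ 2 = 1 ∧ γ * √ω * (t₂ - t₁) = √(1 + γ ^ 2 * ω) - 1 ∧
      γ ^ 2 * ω * (t₁ * t₂) = √(1 + γ ^ 2 * ω) - 1 := by
  set c := √ω
  set s := √(1 + γ ^ 2 * ω)
  set r := √(γ ^ 2 * ω - 2 + 2 * s)
  have hc : 0 < c := sqrt_pos.2 hω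
  have hc2 : c ^ 2 = ω := sq_sqrt hω.le
  have hs2 : s ^ 2 = 1 + γ ^ 2 * ω := sq_sqrt (by positivity)
  have hs1 : 1 < s := (lt_sqrt zero_le_one).2 (by nlinarith [mul_pos (pow_pos hγ 2) hω])
  have hr2 : r ^ 2 = γ ^ 2 * ω - 2 + 2 * s := sq_sqrt (by nlinarith)
  have hr : s - 1 < r := by nlinarith [sqrt_nonneg (γ ^ 2 * ω - 2 + 2 * s)]
  have h2γc : 0 < 2 * γ * c := by positivity
  refine ⟨?_, ?_, ?_, ?_, ?_⟩
  · rw [ht₁]; exact div_pos (by linarith) h2γc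
  · rw [ht₂]; exact div_pos (by linarith) h2γc
  · rw [ht₁, ht₂]
    field_simp
    linear_combination 2 * hr2 + 2 * hs2 - 4 * γ ^ 2 * hc2
  · rw [ht₁, ht₂]
    field_simp
    ring
  · rw [ht₁, ht₂]
    field_simp
    linear_combination ω * (hr2 - hs2) - (4 * s - 4) * hc2

lemma mass_eq_of_params {γ lam c s t₁ t₂ B : ℝ} (hγ : γ ≠ 0) (hlam : lam ≠ 0)
    (hB : B ^ 2 = 2 * c ^ 2 / lam) (hd : γ * c * (t₂ - t₁) = s - 1) :
    B ^ 2 * (2 - t₁ + t₂) / c = 4 * c / lam + 2 / (lam * γ) * s - 2 / (lam * γ) := by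
  rw [hB, show s = 1 + γ * c * (t₂ - t₁) by linarith]
  field_simp
  ring

lemma energy_eq_of_params {γ lam c s t₁ t₂ B : ℝ} (hγ : γ ≠ 0) (hlam : lam ≠ 0) (hc : c ≠ 0)
    (hB : B ^ 2 = 2 * c ^ 2 / lam) (hs : s ^ 2 = 1 + γ ^ 2 * c ^ 2) (hsq : t₁ ^ 2 + t₂ ^ 2 = 1)
    (hd : γ * c * (t₂ - t₁) = s - 1) (hp : γ ^ 2 * c ^ 2 * (t₁ * t₂) = s - 1) :
    1 / 2 * (B ^ 2 * c * (2 - t₁ ^ 3 + t₂ ^ 3) / 3) - 1 / (2 * γ) * (B * t₁ - B * t₂) ^ 2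
      - lam / 4 * (B ^ 4 * (4 / 3 - t₁ + t₁ ^ 3 / 3 + t₂ - t₂ ^ 3 / 3) / c)
      = -(2 / (3 * lam)) * c ^ 3 + (2 - γ ^ 2 * c ^ 2) / (3 * lam * γ ^ 3) * s
        - 2 / (3 * lam * γ ^ 3) := by
  have hcube : t₂ ^ 3 - t₁ ^ 3 = (t₂ - t₁) * (1 + t₁ * t₂) := by
    linear_combination (t₂ - t₁) * hsq
  have hd' : t₂ - t₁ = (s - 1) / (γ * c) := by
    field_simp
    linarith
  have hp' : t₁ * t₂ = (s - 1) / (γ ^ 2 * c ^ 2) := by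
    field_simp
    linarith
  calc _ = (c ^ 3 * (2 / 3 * (t₂ ^ 3 - t₁ ^ 3) - (t₂ - t₁) - 2 / 3)
        - c ^ 2 / γ * (t₂ - t₁) ^ 2) / lam := by
        rw [show B ^ 4 = (B ^ 2) ^ 2 by ring,
          show (B * t₁ - B * t₂) ^ 2 = B ^ 2 * (t₂ - t₁) ^ 2 by ring, hB]
        field_simp
        ring
    _ = (c ^ 3 * (2 / 3 * ((t₂ - t₁) * (1 + t₁ * t₂)) - (t₂ - t₁) - 2 / 3)
        - c ^ 2 / γ * (t₂ - t₁) ^ 2) / lam := by rw [hcube]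
    _ = _ := by
        rw [hd', hp']
        field_simp
        linear_combination -hs

lemma rpow_three_div_two_eq_sqrt_pow {x : ℝ} (hx : 0 ≤ x) : x ^ ((3 : ℝ) / 2) = √x ^ 3 := by
  rw [rpow_div_two_eq_sqrt 3 hx]
  norm_cast

/-- L²-norm, delta-prime energy and action of the asymmetric non-sign-changing stationary
state of the cubic NLS with a delta-prime interaction of strength γ. Here `f₁`, `f₂` are the
two branches of ψ, so ψ(0−) = f₁ 0 and ψ(0+) = f₂ 0. -/
theorem statement11 (γ lam ω : ℝ) (hγ : 0 < γ) (hlam : 0 < lam) (hω : 0 < ω)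
    (t₁ t₂ x₁ x₂ : ℝ)
    (ht₁ : t₁ = (1 - Real.sqrt (1 + γ ^ 2 * ω)
        + Real.sqrt (γ ^ 2 * ω - 2 + 2 * Real.sqrt (1 + γ ^ 2 * ω)))
      / (2 * γ * Real.sqrt ω))
    (ht₂ : t₂ = (-1 + Real.sqrt (1 + γ ^ 2 * ω)
        + Real.sqrt (γ ^ 2 * ω - 2 + 2 * Real.sqrt (1 + γ ^ 2 * ω)))
      / (2 * γ * Real.sqrt ω))
    (hx₁ : x₁ = (1 / (2 * Real.sqrt ω)) * Real.log ((1 + t₁) / (1 - t₁)))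
    (hx₂ : x₂ = (1 / (2 * Real.sqrt ω)) * Real.log ((1 + t₂) / (1 - t₂)))
    (f₁ f₂ ψ : ℝ → ℝ)
    (hf₁ : ∀ x, f₁ x = Real.sqrt (2 * ω / lam) * sech (Real.sqrt ω * (x - x₁)))
    (hf₂ : ∀ x, f₂ x = Real.sqrt (2 * ω / lam) * sech (Real.sqrt ω * (x - x₂)))
    (hψ : ∀ x, ψ x = if x < 0 then f₁ x else f₂ x) :
    (∫ x : ℝ, (ψ x) ^ 2)
      = 4 * Real.sqrt ω / lam + (2 / (lam * γ)) * Real.sqrt (1 + γ ^ 2 * ω) - 2 / (lam * γ) ∧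
    (1 / 2) * (∫ x in ({(0:ℝ)}ᶜ : Set ℝ), (deriv ψ x) ^ 2)
        - (1 / (2 * γ)) * (f₂ 0 - f₁ 0) ^ 2 - (lam / 4) * (∫ x : ℝ, (ψ x) ^ 4)
      = -(2 / (3 * lam)) * ω ^ ((3:ℝ)/2)
        + ((2 - γ ^ 2 * ω) / (3 * lam * γ ^ 3)) * Real.sqrt (γ ^ 2 * ω + 1)
        - 2 / (3 * lam * γ ^ 3) ∧
    ((1 / 2) * (∫ x in ({(0:ℝ)}ᶜ : Set ℝ), (deriv ψ x) ^ 2)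
        - (1 / (2 * γ)) * (f₂ 0 - f₁ 0) ^ 2 - (lam / 4) * (∫ x : ℝ, (ψ x) ^ 4))
        + (ω / 2) * (∫ x : ℝ, (ψ x) ^ 2)
      = (4 / (3 * lam)) * ω ^ ((3:ℝ)/2)
        + (2 / (3 * lam * γ ^ 3)) * (γ ^ 2 * ω + 1) ^ ((3:ℝ)/2)
        - ω / (lam * γ) - 2 / (3 * lam * γ ^ 3) := by
  obtain ⟨ht₁0, ht₂0, hsq, hd, hp⟩ := asymmetric_state_params hγ hω ht₁ ht₂
  obtain ⟨c, hc, rfl⟩ : ∃ c, 0 < c ∧ ω = c ^ 2 := ⟨√ω, sqrt_pos.2 hω, (sq_sqrt hω.le).symm⟩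
  rw [sqrt_sq hc.le] at hd hx₁ hx₂ hf₁ hf₂
  have hs : √(1 + γ ^ 2 * c ^ 2) ^ 2 = 1 + γ ^ 2 * c ^ 2 := sq_sqrt (by positivity)
  have hB : √(2 * c ^ 2 / lam) ^ 2 = 2 * c ^ 2 / lam := sq_sqrt (by positivity)
  obtain ⟨hT₁, hS₁⟩ := tanh_sech_of_eq_half_log hc.ne' ⟨by linarith, by nlinarith⟩ hx₁
  obtain ⟨hT₂, hS₂⟩ := tanh_sech_of_eq_half_log hc.ne' ⟨by linarith, by nlinarith⟩ hx₂
  rw [show 1 - t₁ ^ 2 = t₂ ^ 2 by linarith, sqrt_sq ht₂0.le] at hS₁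
  rw [show 1 - t₂ ^ 2 = t₁ ^ 2 by linarith, sqrt_sq ht₁0.le] at hS₂
  have hjump : f₂ 0 - f₁ 0 = √(2 * c ^ 2 / lam) * t₁ - √(2 * c ^ 2 / lam) * t₂ := by
    rw [hf₁, hf₂, zero_sub, zero_sub, mul_neg, mul_neg, sech_neg, sech_neg, hS₁, hS₂]
  obtain ⟨hN, hK, hQ⟩ := integrals_two_sided_sech_profile (ψ := ψ) hc
    fun x => by rw [hψ, hf₁, hf₂]
  rw [hT₁, hT₂] at hN hK hQ
  rw [rpow_three_div_two_eq_sqrt_pow (sq_nonneg c), sqrt_sq hc.le,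
    rpow_three_div_two_eq_sqrt_pow (by positivity), add_comm (γ ^ 2 * c ^ 2), hjump,
    hN, hK, hQ, mass_eq_of_params hγ.ne' hlam.ne' hB hd,
    energy_eq_of_params hγ.ne' hlam.ne' hc.ne' hB hs hsq hd hp]
  refine ⟨rfl, rfl, ?_⟩
  generalize √(1 + γ ^ 2 * c ^ 2) = s at hs ⊢
  field_simp
  linear_combination (-4 * s) * hs

end
end

section
/- Let γ > 0 and λ > 0, and define for ω > 0: S⁰(ω) := (4/(3λ))ω^{3/2}; S⁺(ω) := (4/(3λ))ω^{3/2} + (2/(3λγ³))(γ²ω + 1)^{3/2} − ω/(λγ) − 2/(3λγ³); Sᵃ(ω) := 16/(3γ³λ) − 4ω/(γλ) + (4/(3λ))ω^{3/2}; S⁻(ω) := (4/(3λ))ω^{3/2} − (2/(3λγ³))(γ²ω + 1)^{3/2} − ω/(λγ) − 2/(3λγ³). Then: (1) S⁰(ω) < S⁺(ω) for every ω > 0; (2) Sᵃ(ω) < S⁰(ω) for every ω > 4/γ²; (3) S⁻(ω) < Sᵃ(ω) for every ω > 8/γ². Consequently, for ω > 8/γ², S⁻(ω) < Sᵃ(ω)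 < S⁰(ω) < S⁺(ω). -/
/-!
With `x = γ²ω` every difference of consecutive actions is `(3λγ³)⁻¹` times an elementary
expression in `x` and `(x + 1)^{3/2}`: `2(x+1)^{3/2} - 3x - 2` for `S⁺ - S⁰`, `4(3x - 4)` for
`S⁰ - Sᵃ`, and `2(x+1)^{3/2} - 9x + 18` for `Sᵃ - S⁻`. The first is positive by Bernoulli's
inequality. For the last, put `t = √(x+1)`: it becomes `2t³ - 9t² + 27 = (t - 3)²(2t + 3)`,
which vanishes only at `x = 8`.
-/

open Real

theorem nine_mul_sub_eighteen_lt_two_mul_rpow {x : ℝ} (hx : -1 ≤ x) (h8 : x ≠ 8) :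
    9 * x - 18 < 2 * (x + 1) ^ ((3:ℝ)/2) := by
  obtain ⟨t, ht, ht_sq, hpow⟩ :
      ∃ t : ℝ, 0 ≤ t ∧ t ^ 2 = x + 1 ∧ (x + 1) ^ ((3:ℝ)/2) = t ^ 3 := by
    have hx1 : 0 ≤ x + 1 := by linarith
    refine ⟨√(x + 1), sqrt_nonneg _, sq_sqrt hx1, ?_⟩
    rw [rpow_div_two_eq_sqrt 3 hx1, ← rpow_natCast]
    norm_num
  have ht3 : t - 3 ≠ 0 := fun h => h8 (by nlinarith)
  have hfactor : 0 < (t - 3) ^ 2 * (2 * t + 3) :=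
    mul_pos (pow_two_pos_of_ne_zero ht3) (by linarith)
  rw [hpow]
  linarith

/-- Ordering of the actions of the four families of stationary states of the cubic NLS with
a delta-prime interaction of strength γ and nonlinearity coefficient λ. -/
theorem statement14 (γ lam : ℝ) (hγ : 0 < γ) (hlam : 0 < lam)
    (S0 Sp Sa Sm : ℝ → ℝ)
    (hS0 : ∀ ω, S0 ω = (4 / (3 * lam)) * ω ^ ((3:ℝ)/2))
    (hSp : ∀ ω, Sp ω = (4 / (3 * lam)) * ω ^ ((3:ℝ)/2)
      + (2 / (3 * lam * γ ^ 3)) * (γ ^ 2 * ω + 1) ^ ((3:ℝ)/2)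
      - ω / (lam * γ) - 2 / (3 * lam * γ ^ 3))
    (hSa : ∀ ω, Sa ω = 16 / (3 * γ ^ 3 * lam) - 4 * ω / (γ * lam)
      + (4 / (3 * lam)) * ω ^ ((3:ℝ)/2))
    (hSm : ∀ ω, Sm ω = (4 / (3 * lam)) * ω ^ ((3:ℝ)/2)
      - (2 / (3 * lam * γ ^ 3)) * (γ ^ 2 * ω + 1) ^ ((3:ℝ)/2)
      - ω / (lam * γ) - 2 / (3 * lam * γ ^ 3)) :
    (∀ ω : ℝ, 0 < ω → S0 ω < Sp ω) ∧
    (∀ ω : ℝ, 4 / γ ^ 2 < ω → Sa ω < S0 ω) ∧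
    (∀ ω : ℝ, 8 / γ ^ 2 < ω → Sm ω < Sa ω) ∧
    (∀ ω : ℝ, 8 / γ ^ 2 < ω → Sm ω < Sa ω ∧ Sa ω < S0 ω ∧ S0 ω < Sp ω) := by
  have hγ2 : 0 < γ ^ 2 := by positivity
  have hscale : 0 < 3 * lam * γ ^ 3 := by positivity
  have hSp_sub : ∀ ω, Sp ω - S0 ω
      = 2 * ((1 + γ ^ 2 * ω) ^ ((3:ℝ)/2) - (1 + 3 / 2 * (γ ^ 2 * ω)))
        / (3 * lam * γ ^ 3) := by
    intro ω; rw [hSp, hS0, add_comm 1]; field_simp; ring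
  have hS0_sub : ∀ ω, S0 ω - Sa ω = 4 * (3 * (γ ^ 2 * ω) - 4) / (3 * lam * γ ^ 3) := by
    intro ω; rw [hS0, hSa]; field_simp; ring
  have hSa_sub : ∀ ω, Sa ω - Sm ω
      = (2 * (γ ^ 2 * ω + 1) ^ ((3:ℝ)/2) - (9 * (γ ^ 2 * ω) - 18)) / (3 * lam * γ ^ 3) := by
    intro ω; rw [hSa, hSm]; field_simp; ring
  have hS0_lt_Sp : ∀ ω : ℝ, 0 < ω → S0 ω < Sp ω := by
    intro ω hω
    have hx : 0 < γ ^ 2 * ω := by positivity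
    have := one_add_mul_self_lt_rpow_one_add (by linarith) hx.ne' (by norm_num : (1:ℝ) < 3 / 2)
    rw [← sub_pos, hSp_sub]
    exact div_pos (by linarith) hscale
  have hSa_lt_S0 : ∀ ω : ℝ, 4 / γ ^ 2 < ω → Sa ω < S0 ω := by
    intro ω hω
    have hx : 4 < γ ^ 2 * ω := (div_lt_iff₀' hγ2).mp hω
    rw [← sub_pos, hS0_sub]
    exact div_pos (by linarith) hscale
  have hSm_lt_Sa : ∀ ω : ℝ, 8 / γ ^ 2 < ω → Sm ω < Sa ω := by
    intro ω hω
    have hx : 8 < γ ^ 2 * ω := (div_lt_iff₀' hγ2).mp hω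
    have := nine_mul_sub_eighteen_lt_two_mul_rpow (by linarith) hx.ne'
    rw [← sub_pos, hSa_sub]
    exact div_pos (by linarith) hscale
  have h48 : 4 / γ ^ 2 < 8 / γ ^ 2 := div_lt_div_of_pos_right (by norm_num) hγ2
  have h08 : 0 < 8 / γ ^ 2 := by positivity
  exact ⟨hS0_lt_Sp, hSa_lt_S0, hSm_lt_Sa, fun ω hω =>
    ⟨hSm_lt_Sa ω hω, hSa_lt_S0 ω (h48.trans hω), hS0_lt_Sp ω (h08.trans hω)⟩⟩
end

section
/- Define for ρ > 0: E⁰(ρ) := −ρ³/96; E⁺(ρ) := −(5/216)ρ³ + (1/54)(ρ² + 4ρ + 16)^{3/2} − (5/36)ρ² − (4/9)ρ − 32/27; Eᵃ(ρ) := −ρ³/96 − ρ²/4 − 2ρ; E⁻(ρ) := −(5/216)ρ³ − (1/54)(ρ² + 4ρ + 16)^{3/2} − (5/36)ρ² − (4/9)ρ − 32/27. Then: (1) for every ρ > 0, Eᵃ(ρ) < E⁰(ρ) < E⁺(ρ); (2) for every ρ > 8(√2 − 1), E⁻(ρ) < Eᵃ(ρ). Consequently, for ρ > 8(√2 − 1),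 E⁻(ρ) < Eᵃ(ρ) < E⁰(ρ) < E⁺(ρ). -/
/- Writing s = ρ² + 4ρ + 16, each comparison involving s^(3/2) reduces, after clearing
denominators, to a cubic polynomial p(ρ) lying below 16 s^(3/2); squaring, this follows from
the factorizations
  256 s³ - (11ρ³ + 120ρ² + 384ρ + 1024)² = 27 ρ⁴ (5ρ² + 16ρ + 64),
  256 s³ - (-11ρ³ + 96ρ² + 1344ρ - 1024)² = 27 ρ (5ρ + 32) (ρ² + 16ρ - 64)²,
whose right-hand sides are positive for ρ > 0 (and, for the second, ρ² + 16ρ ≠ 64, i.e.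
ρ ≠ 8(√2 - 1)). -/

open Real

noncomputable section

lemma lt_rpow_three_halves_of_sq_lt {a s : ℝ} (hs : 0 ≤ s) (h : a ^ 2 < s ^ 3) :
    a < s ^ ((3 : ℝ) / 2) := by
  have hsqrt : s ^ ((3 : ℝ) / 2) = √(s ^ 3) := by
    rw [sqrt_eq_rpow, ← rpow_natCast, ← rpow_mul hs]
    norm_num
  rw [hsqrt]
  exact lt_sqrt_of_sq_lt h

def energyZero (ρ : ℝ) : ℝ := -ρ ^ 3 / 96

def energyPlus (ρ : ℝ) : ℝ :=
  -(5 / 216) * ρ ^ 3 + (1 / 54) * (ρ ^ 2 + 4 * ρ + 16) ^ ((3 : ℝ) / 2)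
    - (5 / 36) * ρ ^ 2 - (4 / 9) * ρ - 32 / 27

def energyAnti (ρ : ℝ) : ℝ := -ρ ^ 3 / 96 - ρ ^ 2 / 4 - 2 * ρ

def energyMinus (ρ : ℝ) : ℝ :=
  -(5 / 216) * ρ ^ 3 - (1 / 54) * (ρ ^ 2 + 4 * ρ + 16) ^ ((3 : ℝ) / 2)
    - (5 / 36) * ρ ^ 2 - (4 / 9) * ρ - 32 / 27

lemma energyAnti_lt_energyZero {ρ : ℝ} (hρ : 0 < ρ) : energyAnti ρ < energyZero ρ := by
  unfold energyAnti energyZero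
  nlinarith

lemma energyZero_lt_energyPlus {ρ : ℝ} (hρ : 0 < ρ) : energyZero ρ < energyPlus ρ := by
  have hfactor : (ρ ^ 2 + 4 * ρ + 16) ^ 3 - ((11 * ρ ^ 3 + 120 * ρ ^ 2 + 384 * ρ + 1024) / 16) ^ 2
      = 27 * ρ ^ 4 * (5 * ρ ^ 2 + 16 * ρ + 64) / 256 := by ring
  have hsq : ((11 * ρ ^ 3 + 120 * ρ ^ 2 + 384 * ρ + 1024) / 16) ^ 2
      < (ρ ^ 2 + 4 * ρ + 16) ^ 3 := by
    have : 0 < 27 * ρ ^ 4 * (5 * ρ ^ 2 + 16 * ρ + 64) / 256 := by positivity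
    linarith
  have h := lt_rpow_three_halves_of_sq_lt (by positivity) hsq
  unfold energyZero energyPlus
  linarith

lemma energyMinus_lt_energyAnti {ρ : ℝ} (hρ : 0 < ρ) (hq : ρ ^ 2 + 16 * ρ ≠ 64) :
    energyMinus ρ < energyAnti ρ := by
  have hfactor : (ρ ^ 2 + 4 * ρ + 16) ^ 3 - ((-11 * ρ ^ 3 + 96 * ρ ^ 2 + 1344 * ρ - 1024) / 16) ^ 2
      = 27 * ρ * (5 * ρ + 32) * (ρ ^ 2 + 16 * ρ - 64) ^ 2 / 256 := by ring
  have hsq : ((-11 * ρ ^ 3 + 96 * ρ ^ 2 + 1344 * ρ - 1024) / 16) ^ 2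
      < (ρ ^ 2 + 4 * ρ + 16) ^ 3 := by
    have : ρ ^ 2 + 16 * ρ - 64 ≠ 0 := sub_ne_zero.mpr hq
    have : 0 < 27 * ρ * (5 * ρ + 32) * (ρ ^ 2 + 16 * ρ - 64) ^ 2 / 256 := by positivity
    linarith
  have h := lt_rpow_three_halves_of_sq_lt (by positivity) hsq
  unfold energyMinus energyAnti
  linarith

lemma pos_of_threshold_lt {ρ : ℝ} (hρ : 8 * (√2 - 1) < ρ) : 0 < ρ := by
  have : 1 < √2 := by
    rw [lt_sqrt zero_le_one]
    norm_num
  linarith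

lemma sixty_four_lt_of_threshold_lt {ρ : ℝ} (hρ : 8 * (√2 - 1) < ρ) : 64 < ρ ^ 2 + 16 * ρ := by
  nlinarith [sq_sqrt (zero_le_two : (0 : ℝ) ≤ 2), sqrt_nonneg 2]

/-- Ordering of the delta-prime energies (at γ = λ = 1) of the four families of stationary
states of the cubic NLS with a delta-prime interaction, parametrized by the squared L²
norm ρ. -/
theorem statement15 (E0 Ep Ea Em : ℝ → ℝ)
    (hE0 : ∀ ρ, E0 ρ = -ρ ^ 3 / 96)
    (hEp : ∀ ρ, Ep ρ = -(5 / 216) * ρ ^ 3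
      + (1 / 54) * (ρ ^ 2 + 4 * ρ + 16) ^ ((3:ℝ)/2)
      - (5 / 36) * ρ ^ 2 - (4 / 9) * ρ - 32 / 27)
    (hEa : ∀ ρ, Ea ρ = -ρ ^ 3 / 96 - ρ ^ 2 / 4 - 2 * ρ)
    (hEm : ∀ ρ, Em ρ = -(5 / 216) * ρ ^ 3
      - (1 / 54) * (ρ ^ 2 + 4 * ρ + 16) ^ ((3:ℝ)/2)
      - (5 / 36) * ρ ^ 2 - (4 / 9) * ρ - 32 / 27) :
    (∀ ρ : ℝ, 0 < ρ → Ea ρ < E0 ρ ∧ E0 ρ < Ep ρ) ∧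
    (∀ ρ : ℝ, 8 * (Real.sqrt 2 - 1) < ρ → Em ρ < Ea ρ) ∧
    (∀ ρ : ℝ, 8 * (Real.sqrt 2 - 1) < ρ →
      Em ρ < Ea ρ ∧ Ea ρ < E0 ρ ∧ E0 ρ < Ep ρ) := by
  obtain rfl : E0 = energyZero := funext hE0
  obtain rfl : Ep = energyPlus := funext hEp
  obtain rfl : Ea = energyAnti := funext hEa
  obtain rfl : Em = energyMinus := funext hEm
  have minus_lt_anti : ∀ ρ : ℝ, 8 * (√2 - 1) < ρ → energyMinus ρ < energyAnti ρ :=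
    fun ρ hρ => energyMinus_lt_energyAnti (pos_of_threshold_lt hρ)
      (sixty_four_lt_of_threshold_lt hρ).ne'
  refine ⟨fun ρ hρ => ⟨energyAnti_lt_energyZero hρ, energyZero_lt_energyPlus hρ⟩,
    minus_lt_anti, fun ρ hρ => ?_⟩
  have hρ0 := pos_of_threshold_lt hρ
  exact ⟨minus_lt_anti ρ hρ, energyAnti_lt_energyZero hρ0, energyZero_lt_energyPlus hρ0⟩

end
end
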